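/- arXiv:1510.03544 — 6 statements merged into one kernel-verified Lean document; each statement's English description precedes it below -/
import Mathlib

section
/- Let w be a weight on ℝⁿ and define the measure function h(B(x,r)) := (1/r) ∫_{B(x,r)} w on balls. If a compact set S ⊆ ℝⁿ satisfies ℋ^h(S) = 0, then S is Lebesgue-negligible. -/
open MeasureTheory Metric Filter Set ENNReal

noncomputable section

variable {n : ℕ}

/-- Euclidean space `ℝⁿ`. -/
abbrev Eu (n : ℕ) := EuclideanSpace ℝ (Fin n)

/-- Integral of the weight `w` over a set (with respect to Lebesgue measure). -/
def wInt (w : Eu n → ℝ) (s : Set (Eu n)) : ℝ≥0∞ :=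
  ∫⁻ x in s, ENNReal.ofReal (w x)

/-- A weight: locally integrable and a.e. positive. -/
def IsWeight (w : Eu n → ℝ) : Prop :=
  MeasureTheory.LocallyIntegrable w volume ∧
    ∀ᵐ x ∂(volume : Measure (Eu n)), 0 < w x

/-- `w` is doubling with constant `C`. -/
def IsDoublingWeight (w : Eu n → ℝ) (C : ℝ) : Prop :=
  1 ≤ C ∧ ∀ (x : Eu n) (r : ℝ), 0 < r →
    wInt w (ball x (2 * r)) ≤ ENNReal.ofReal C * wInt w (ball x r)

/-- The measure function `h(B(x,r)) = (1/r) ∫_{B(x,r)} w`. -/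
def hB (w : Eu n → ℝ) (x : Eu n) (r : ℝ) : ℝ≥0∞ :=
  ENNReal.ofReal (1 / r) * wInt w (ball x r)

/-- The size-`δ` weighted Hausdorff content `ℋ^h_δ`. -/
def Hcont (w : Eu n → ℝ) (δ : ℝ≥0∞) (S : Set (Eu n)) : ℝ≥0∞ :=
  ⨅ (c : ℕ → Eu n) (r : ℕ → ℝ)
    (_ : ∀ j, 0 < r j ∧ ENNReal.ofReal (r j) ≤ δ)
    (_ : S ⊆ ⋃ j, ball (c j) (r j)), ∑' j, hB w (c j) (r j)

/-- The weighted codimension-one Hausdorff measure `ℋ^h = lim_{δ→0} ℋ^h_δ`. -/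
def Hmeas (w : Eu n → ℝ) (S : Set (Eu n)) : ℝ≥0∞ :=
  ⨆ (δ : ℝ≥0∞) (_ : 0 < δ), Hcont w δ S

/-- A (real valued) Lipschitz function. -/
def IsLip (φ : Eu n → ℝ) : Prop := ∃ K, LipschitzWith K φ

/-- A compactly supported Lipschitz test function. -/
def LipTest (φ : Eu n → ℝ) : Prop := IsLip φ ∧ HasCompactSupport φ

/-- `∫ |∇φ| w`. -/
def gradInt (w : Eu n → ℝ) (φ : Eu n → ℝ) : ℝ≥0∞ :=
  ∫⁻ x, ENNReal.ofReal (‖fderiv ℝ φ x‖ * w x)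

/-- Miranda's metric weighted variation `‖Du‖_w`. -/
def varW (w : Eu n → ℝ) (u : Eu n → ℝ) : ℝ≥0∞ :=
  ⨅ (φ : ℕ → Eu n → ℝ) (_ : ∀ k, IsLip (φ k))
    (_ : Filter.Tendsto (fun k => ∫⁻ x, ENNReal.ofReal (|φ k x - u x| * w x))
          atTop (nhds 0)),
    Filter.liminf (fun k => gradInt w (φ k)) atTop

/-- The weighted perimeter `P_w(B) = ‖Dχ_B‖_w`. -/
def perim (w : Eu n → ℝ) (B : Set (Eu n)) : ℝ≥0∞ :=
  varW w (Set.indicator B (fun _ => 1))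

/-- The weighted measure `w dx`. -/
def wMeasure (w : Eu n → ℝ) : Measure (Eu n) :=
  (volume : Measure (Eu n)).withDensity (fun x => ENNReal.ofReal (w x))

/-- The weighted `(1,q)`-Poincaré inequality on balls. -/
def PoincareP (q : ℝ) (w : Eu n → ℝ) : Prop :=
  ∃ C > (0:ℝ), ∃ τ > (1:ℝ), ∀ φ : Eu n → ℝ, LipTest φ →
    ∀ (x : Eu n) (r : ℝ), 0 < r →
      (wMeasure w (ball x r))⁻¹ *
        ∫⁻ y in ball x r,
          ENNReal.ofReal |φ y - ⨍ z in ball x r, φ z ∂(wMeasure w)| ∂(wMeasure w)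
      ≤ ENNReal.ofReal (C * r) *
        ((wMeasure w (ball x (τ * r)))⁻¹ *
          ∫⁻ y in ball x (τ * r),
            (ENNReal.ofReal ‖fderiv ℝ φ y‖) ^ q ∂(wMeasure w)) ^ (1 / q)

/-- A `q`-admissible weight: a doubling weight supporting a `(1,q)`-Poincaré inequality. -/
def Admissible (q : ℝ) (w : Eu n → ℝ) : Prop :=
  IsWeight w ∧ (∃ C, IsDoublingWeight w C) ∧ PoincareP q w

/-- The pairing `⟨div v, φ⟩ = -∫ v·∇φ`. -/
def divPairing (v : Eu n → Eu n) (φ : Eu n → ℝ) : ℝ :=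
  -∫ x, fderiv ℝ φ x (v x)

/-- Membership in `L^∞_{1/w}(ℝⁿ,ℝⁿ)`. -/
def MemLinfInv (w : Eu n → ℝ) (v : Eu n → Eu n) : Prop :=
  AEStronglyMeasurable v volume ∧
    ∃ M : ℝ, ∀ᵐ x ∂(volume : Measure (Eu n)), ‖v x‖ ≤ M * w x

/-- `div v = 0` outside the compact set `S`. -/
def DivZeroOutside (v : Eu n → Eu n) (S : Set (Eu n)) : Prop :=
  ∀ φ : Eu n → ℝ, LipTest φ → Disjoint (tsupport φ) S → divPairing v φ = 0

/-- `S` is `L^∞_{1/w}`-removable for `div v = 0`. -/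
def RemovableLinf (w : Eu n → ℝ) (S : Set (Eu n)) : Prop :=
  ∀ v : Eu n → Eu n, MemLinfInv w v → DivZeroOutside v S →
    ∀ φ : Eu n → ℝ, LipTest φ → divPairing v φ = 0

/-- Membership in `L^p_{1/w}(ℝⁿ,ℝⁿ)`. -/
def MemLpInv (p : ℝ) (w : Eu n → ℝ) (v : Eu n → Eu n) : Prop :=
  AEStronglyMeasurable v volume ∧
    (∫⁻ x, (ENNReal.ofReal ‖v x‖) ^ p * (ENNReal.ofReal (w x))⁻¹) < ⊤

/-- `S` is `L^p_{1/w}`-removable for `div v = 0`. -/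
def RemovableLp (p : ℝ) (w : Eu n → ℝ) (S : Set (Eu n)) : Prop :=
  ∀ v : Eu n → Eu n, MemLpInv p w v → DivZeroOutside v S →
    ∀ φ : Eu n → ℝ, LipTest φ → divPairing v φ = 0

/-- The Muckenhoupt `A_q` condition, `1 < q < ∞`. -/
def MuckenhouptAq (q : ℝ) (v : Eu n → ℝ) : Prop :=
  ∃ C : ℝ, ∀ (x : Eu n) (r : ℝ), 0 < r →
    (⨍ y in ball x r, v y) *
      (⨍ y in ball x r, (v y) ^ (1 / (1 - q))) ^ (q - 1) ≤ C

/-- The weighted Sobolev `q`-capacity with respect to the weight `v`. -/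
def SobCap (q : ℝ) (v : Eu n → ℝ) (E : Set (Eu n)) : ℝ≥0∞ :=
  ⨅ (φ : Eu n → ℝ)
    (_ : ContDiff ℝ (⊤ : ℕ∞) φ ∧ HasCompactSupport φ ∧
          ∃ U, IsOpen U ∧ E ⊆ U ∧ ∀ x ∈ U, 1 ≤ φ x),
    ∫⁻ x, (ENNReal.ofReal (|φ x| ^ q) + ENNReal.ofReal (‖fderiv ℝ φ x‖ ^ q)) *
      ENNReal.ofReal (v x)

/-- The `R`-truncated Riesz potential (of order one) of a measure. -/
def rieszTrunc (R : ℝ) (μ : Measure (Eu n)) (x : Eu n) : ℝ≥0∞ :=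
  ∫⁻ y in ball x R, ENNReal.ofReal (‖x - y‖ ^ (1 - (n : ℝ))) ∂μ

/-- The `(p, 1/w; R)`-energy of a measure. -/
def rieszEnergy (p R : ℝ) (w : Eu n → ℝ) (μ : Measure (Eu n)) : ℝ≥0∞ :=
  ∫⁻ x, (rieszTrunc R μ x) ^ p * (ENNReal.ofReal (w x))⁻¹

/-- If a compact set `S ⊆ ℝⁿ` satisfies `ℋ^h(S) = 0`, where `h(B(x,r)) = (1/r)∫_{B(x,r)} w`
for a weight `w`, then `S` is Lebesgue-negligible. -/
theorem lebesgue_negligible_of_Hmeas_zero {n : ℕ} (w : Eu n → ℝ) (hw : IsWeight w)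
    (S : Set (Eu n)) (hS : IsCompact S) (h0 : Hmeas w S = 0) :
    volume S = 0 := by
  have hwS : wMeasure w S = 0 := by
    have h1 : Hcont w 1 S = 0 := by
      have hle : Hcont w 1 S ≤ Hmeas w S :=
        le_iSup₂ (f := fun δ (_ : (0:ℝ≥0∞) < δ) => Hcont w δ S) 1 one_pos
      rw [h0] at hle
      exact le_antisymm hle (zero_le)
    have key : wMeasure w S ≤ Hcont w 1 S := by
      rw [Hcont]
      refine le_iInf fun c => le_iInf fun r => le_iInf fun hr => le_iInf fun hcov => ?_
      calc wMeasure w S ≤ wMeasure w (⋃ j, ball (c j) (r j)) := measure_mono hcov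
        _ ≤ ∑' j, wMeasure w (ball (c j) (r j)) := measure_iUnion_le _
        _ ≤ ∑' j, hB w (c j) (r j) := by
            refine ENNReal.tsum_le_tsum fun j => ?_
            have hrj := (hr j).1
            have hle1 : ENNReal.ofReal (r j) ≤ 1 := (hr j).2
            have hwm : wMeasure w (ball (c j) (r j)) = wInt w (ball (c j) (r j)) := by
              rw [wMeasure, withDensity_apply _ measurableSet_ball]; rfl
            rw [hwm, hB]
            calc wInt w (ball (c j) (r j))
                = (ENNReal.ofReal (r j) * ENNReal.ofReal (1 / r j)) *
                    wInt w (ball (c j) (r j)) := by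
                  rw [← ENNReal.ofReal_mul hrj.le, mul_one_div, div_self hrj.ne',
                    ENNReal.ofReal_one, one_mul]
              _ ≤ (1 * ENNReal.ofReal (1 / r j)) * wInt w (ball (c j) (r j)) := by gcongr
              _ = ENNReal.ofReal (1 / r j) * wInt w (ball (c j) (r j)) := by rw [one_mul]
    exact le_antisymm (key.trans h1.le) (zero_le)
  obtain ⟨t, hSt, htm, ht0⟩ := exists_measurable_superset_of_null hwS
  have hint : ∫⁻ x in t, ENNReal.ofReal (w x) ∂(volume : Measure (Eu n)) = 0 := by
    rw [← withDensity_apply _ htm]; exact ht0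
  have haem : AEMeasurable (fun x => ENNReal.ofReal (w x)) ((volume : Measure (Eu n)).restrict t) :=
    (hw.1.aestronglyMeasurable.aemeasurable.ennreal_ofReal).restrict
  have hz : ∀ᵐ x ∂((volume : Measure (Eu n)).restrict t), ENNReal.ofReal (w x) = 0 :=
    (lintegral_eq_zero_iff' haem).mp hint
  have hpos : ∀ᵐ x ∂((volume : Measure (Eu n)).restrict t), 0 < w x :=
    ae_restrict_of_ae hw.2
  have hFalse : ∀ᵐ _x ∂((volume : Measure (Eu n)).restrict t), False := by
    filter_upwards [hz, hpos] with x h1 h2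
    rw [ENNReal.ofReal_eq_zero] at h1
    linarith
  have ht : volume t = 0 := by
    have := ae_iff.mp hFalse
    simpa [Measure.restrict_apply_univ] using this
  exact measure_mono_null hSt ht

end
end

section
/- Let w be a doubling weight on ℝⁿ such that lim_{r→∞} (1/r)∫_{B(0,r)} w = ∞. Then for any bounded set B ⊆ ℝⁿ, one has ℋ^h(B) = 0 if and only if ℋ^h_∞(B) = 0. -/
open MeasureTheory Metric Filter Set ENNReal

noncomputable section

variable {n : ℕ}

private lemma wInt_mono {n : ℕ} (w : Eu n → ℝ) {s t : Set (Eu n)} (h : s ⊆ t) :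
    wInt w s ≤ wInt w t := lintegral_mono_set h

private lemma wInt_doubling_pow {n : ℕ} {w : Eu n → ℝ} {C : ℝ} (hdoub : IsDoublingWeight w C)
    (x : Eu n) {r : ℝ} (hr : 0 < r) (k : ℕ) :
    wInt w (ball x (2 ^ k * r)) ≤ (ENNReal.ofReal C) ^ k * wInt w (ball x r) := by
  induction k with
  | zero => simp
  | succ k ih =>
      have h2 : (2:ℝ) ^ (k+1) * r = 2 * (2 ^ k * r) := by ring
      rw [h2]
      calc wInt w (ball x (2 * (2 ^ k * r)))
          ≤ ENNReal.ofReal C * wInt w (ball x (2 ^ k * r)) := hdoub.2 x _ (by positivity)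
        _ ≤ ENNReal.ofReal C * ((ENNReal.ofReal C) ^ k * wInt w (ball x r)) :=
            mul_le_mul_right ih _
        _ = (ENNReal.ofReal C) ^ (k+1) * wInt w (ball x r) := by ring

private lemma wInt_ball_pos {n : ℕ} {w : Eu n → ℝ} (hw : IsWeight w) (x : Eu n) {r : ℝ}
    (hr : 0 < r) : 0 < wInt w (ball x r) := by
  rw [pos_iff_ne_zero]
  intro h0
  have hm : AEMeasurable (fun y => ENNReal.ofReal (w y))
      ((volume : Measure (Eu n)).restrict (ball x r)) :=
    (ENNReal.measurable_ofReal.comp_aemeasurable hw.1.aestronglyMeasurable.aemeasurable).restrict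
  rw [wInt, lintegral_eq_zero_iff' hm] at h0
  have hpos : ∀ᵐ y ∂((volume : Measure (Eu n)).restrict (ball x r)), 0 < w y :=
    ae_restrict_of_ae hw.2
  have hfalse : ∀ᵐ y ∂((volume : Measure (Eu n)).restrict (ball x r)), False := by
    filter_upwards [h0, hpos] with y h1 h2
    simp only [Pi.zero_apply, ENNReal.ofReal_eq_zero] at h1
    linarith
  have hne : (volume : Measure (Eu n)).restrict (ball x r) ≠ 0 := by
    rw [Ne, Measure.restrict_eq_zero]
    exact (measure_ball_pos volume x hr).ne'
  exact (MeasureTheory.ae_neBot.mpr hne).ne (Filter.eventually_false_iff_eq_bot.mp hfalse)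

private lemma exists_lower_bound {n : ℕ} {w : Eu n → ℝ} {C : ℝ} (hw : IsWeight w)
    (hdoub : IsDoublingWeight w C)
    (hgrowth : Filter.Tendsto (fun r : ℝ => hB w (0 : Eu n) r) Filter.atTop (nhds ⊤))
    {B : Set (Eu n)} (hbdd : Bornology.IsBounded B) {δ₀ : ℝ} (hδ₀ : 0 < δ₀) :
    ∃ c : ℝ≥0∞, 0 < c ∧ c ≠ ⊤ ∧
      ∀ x r, δ₀ ≤ r → (ball x r ∩ B).Nonempty → c ≤ hB w x r := by
  have h1 : ∀ᶠ r in (atTop : Filter ℝ), hB w (0 : Eu n) r ∈ Ioi (1 : ℝ≥0∞) :=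
    hgrowth (Ioi_mem_nhds one_lt_top)
  obtain ⟨T, hT⟩ := Filter.eventually_atTop.mp h1
  set T' : ℝ := max T δ₀ with hT'
  have hT'pos : 0 < T' := lt_of_lt_of_le hδ₀ (le_max_right _ _)
  obtain ⟨R₀, hR₀⟩ := hbdd.subset_ball (0 : Eu n)
  set R : ℝ := max R₀ δ₀ with hR
  have hRδ : δ₀ ≤ R := le_max_right _ _
  have hBR : B ⊆ ball (0 : Eu n) R := hR₀.trans (ball_subset_ball (le_max_left _ _))
  obtain ⟨k, hk⟩ := pow_unbounded_of_one_lt (2 + R / δ₀) (one_lt_two (α := ℝ))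
  set K : ℝ≥0∞ := (ENNReal.ofReal C) ^ k with hK
  have hCpos : (0:ℝ) < C := lt_of_lt_of_le one_pos hdoub.1
  have hK1 : 1 ≤ K := one_le_pow_of_one_le' (by
    rw [← ENNReal.ofReal_one]; exact ENNReal.ofReal_le_ofReal hdoub.1) k
  have hKtop : K ≠ ⊤ := (pow_ne_top ENNReal.ofReal_ne_top)
  set c₁ : ℝ≥0∞ := ENNReal.ofReal (1 / T') * wInt w (ball (0 : Eu n) δ₀) with hc₁def
  have hc₁ : 0 < c₁ := ENNReal.mul_pos
    (ENNReal.ofReal_pos.mpr (by positivity)).ne' (wInt_ball_pos hw _ hδ₀).ne'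
  set c₀ : ℝ≥0∞ := min c₁ 1 with hc₀def
  have hc₀pos : 0 < c₀ := lt_min hc₁ one_pos
  have hc₀r : ∀ r, δ₀ ≤ r → c₀ ≤ hB w 0 r := by
    intro r hr
    have hrpos : 0 < r := lt_of_lt_of_le hδ₀ hr
    rcases le_or_gt T' r with h | h
    · exact le_trans (min_le_right _ _)
        (le_of_lt (mem_Ioi.mp (hT r (le_trans (le_max_left _ _) h))))
    · refine le_trans (min_le_left _ _) ?_
      rw [hB]
      exact mul_le_mul'
        (ENNReal.ofReal_le_ofReal (one_div_le_one_div_of_le hrpos h.le))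
        (wInt_mono w (ball_subset_ball hr))
  refine ⟨c₀ / K, ENNReal.div_pos hc₀pos.ne' hKtop, ?_, ?_⟩
  · have : c₀ / K ≤ c₀ := ENNReal.div_le_of_le_mul (le_mul_of_one_le_right zero_le hK1)
    exact (lt_of_le_of_lt (this.trans (min_le_right _ _)) one_lt_top).ne
  · intro x r hr hne
    obtain ⟨z, hz1, hz2⟩ := hne
    have hrpos : 0 < r := lt_of_lt_of_le hδ₀ hr
    have h2k : (2:ℝ) ≤ 2 ^ k := by
      calc (2:ℝ) ≤ 2 + R / δ₀ := by
              have : (0:ℝ) ≤ R / δ₀ := by positivity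
              linarith
        _ ≤ 2 ^ k := hk.le
    have hsub : ball (0 : Eu n) r ⊆ ball x (2 ^ k * r) := by
      intro y hy
      rw [mem_ball]
      have hd1 : dist y x ≤ dist y (0 : Eu n) + dist (0 : Eu n) z + dist z x :=
        dist_triangle4 y 0 z x
      have hd2 : dist y (0 : Eu n) < r := mem_ball.mp hy
      have hd3 : dist (0 : Eu n) z < R := by
        rw [dist_comm]; exact mem_ball.mp (hBR hz2)
      have hd4 : dist z x < r := mem_ball.mp hz1
      have hk' : 2 * δ₀ + R < 2 ^ k * δ₀ := by
        have := mul_lt_mul_of_pos_right hk hδ₀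
        rw [add_mul, div_mul_cancel₀ _ hδ₀.ne'] at this
        linarith
      nlinarith [mul_nonneg (sub_nonneg.mpr h2k) (sub_nonneg.mpr hr)]
    have h2 : wInt w (ball (0 : Eu n) r) ≤ K * wInt w (ball x r) :=
      le_trans (wInt_mono w hsub) (wInt_doubling_pow hdoub x hrpos k)
    have h3 : hB w 0 r ≤ K * hB w x r := by
      rw [hB, hB, mul_left_comm]
      exact mul_le_mul_right h2 _
    have h4 : c₀ ≤ hB w x r * K := le_trans (hc₀r r hr) (by rw [mul_comm]; exact h3)
    exact ENNReal.div_le_of_le_mul h4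

set_option maxHeartbeats 1000000 in
private lemma exists_small_ball {m : ℕ} (w : Eu (m+1) → ℝ) {δ₀ : ℝ} (hδ₀ : 0 < δ₀)
    (x : Eu (m+1)) {r : ℝ} (hr : δ₀ ≤ r) :
    ∃ y : Eu (m+1), hB w y δ₀ ≤ 2 * hB w x r := by
  have hrpos : 0 < r := lt_of_lt_of_le hδ₀ hr
  set A := wInt w (ball x r) with hA
  rcases eq_or_ne A ⊤ with hAtop | hAtop
  · refine ⟨x, le_top.trans_eq ?_⟩
    rw [hB, ← hA, hAtop, ENNReal.mul_top (ENNReal.ofReal_pos.mpr (by positivity)).ne',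
      ENNReal.mul_top two_ne_zero]
  · set N := ⌊r / δ₀⌋₊ with hNdef
    have hN1 : 1 ≤ N := Nat.le_floor (by
      rw [Nat.cast_one]; exact (one_le_div hδ₀).mpr hr)
    have hNR : (1:ℝ) ≤ N := by exact_mod_cast hN1
    have hNfl : (N : ℝ) * δ₀ ≤ r := by
      have := Nat.floor_le (show (0:ℝ) ≤ r / δ₀ by positivity)
      rw [← hNdef] at this
      calc (N : ℝ) * δ₀ ≤ (r / δ₀) * δ₀ := by nlinarith
        _ = r := by field_simp
    have hrN : r ≤ 2 * N * δ₀ := by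
      have h1 : r / δ₀ < (N : ℝ) + 1 := by
        have := Nat.lt_floor_add_one (r / δ₀); rw [← hNdef] at this; exact this
      rw [div_lt_iff₀ hδ₀] at h1
      nlinarith
    set e : Eu (m+1) := EuclideanSpace.single (0 : Fin (m+1)) (1:ℝ) with he
    have hnorme : ‖e‖ = 1 := by rw [he, EuclideanSpace.norm_single]; norm_num
    set y : ℕ → Eu (m+1) := fun i => x + ((2*(i:ℝ)+1) * δ₀ - r) • e with hy
    have hdisty : ∀ i j : ℕ, dist (y i) (y j) = |2*((i:ℝ) - j)*δ₀| := by
      intro i j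
      rw [hy]; dsimp only
      rw [dist_add_left, dist_eq_norm, ← sub_smul, norm_smul, hnorme, mul_one,
        Real.norm_eq_abs]
      congr 1
      ring
    have hsub : ∀ i < N, ball (y i) δ₀ ⊆ ball x r := by
      intro i hi
      apply ball_subset_ball'
      have hdyx : dist (y i) x = |(2*(i:ℝ)+1) * δ₀ - r| := by
        rw [hy]; dsimp only
        rw [dist_eq_norm, add_sub_cancel_left, norm_smul, hnorme, mul_one,
          Real.norm_eq_abs]
      rw [hdyx]
      have h1 : ((i:ℝ) + 1) * δ₀ ≤ r := by
        have hiN : ((i:ℝ) + 1) ≤ (N : ℝ) := by exact_mod_cast Nat.succ_le_of_lt hi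
        nlinarith
      have h0i : (0:ℝ) ≤ (i:ℝ) * δ₀ := by positivity
      rcases abs_cases ((2*(i:ℝ)+1) * δ₀ - r) with ⟨habs, _⟩ | ⟨habs, _⟩ <;> rw [habs] <;>
        nlinarith
    have hdisj : (↑(Finset.range N) : Set ℕ).PairwiseDisjoint (fun i => ball (y i) δ₀) := by
      intro i _ j _ hij
      apply ball_disjoint_ball
      rw [hdisty]
      have h1 : (1:ℝ) ≤ |(i:ℝ) - (j:ℝ)| := by
        have hz : ((i:ℤ) - (j:ℤ)) ≠ 0 := sub_ne_zero.mpr (by exact_mod_cast hij)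
        have := Int.one_le_abs hz
        have hcast : |(i:ℝ) - (j:ℝ)| = ((|(i:ℤ) - (j:ℤ)| : ℤ) : ℝ) := by
          push_cast [Int.cast_abs]
          norm_num
        rw [hcast]
        exact_mod_cast this
      rw [abs_mul, abs_mul, abs_of_pos hδ₀, abs_two]
      nlinarith [mul_le_mul_of_nonneg_right h1 hδ₀.le]
    set ν := (volume : Measure (Eu (m+1))).withDensity (fun z => ENNReal.ofReal (w z)) with hν
    have hνball : ∀ (z : Eu (m+1)) (s : ℝ), ν (ball z s) = wInt w (ball z s) := fun z s =>
      withDensity_apply _ measurableSet_ball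
    have hsum : ∑ i ∈ Finset.range N, wInt w (ball (y i) δ₀) ≤ A := by
      calc ∑ i ∈ Finset.range N, wInt w (ball (y i) δ₀)
          = ∑ i ∈ Finset.range N, ν (ball (y i) δ₀) := by
            exact Finset.sum_congr rfl fun i _ => (hνball _ _).symm
        _ = ν (⋃ i ∈ Finset.range N, ball (y i) δ₀) :=
            (measure_biUnion_finset hdisj (fun b _ => measurableSet_ball)).symm
        _ ≤ ν (ball x r) := measure_mono (Set.iUnion₂_subset fun i hi =>
            hsub i (Finset.mem_range.mp hi))
        _ = A := by rw [hνball, hA]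
    have hNne0 : (N:ℝ≥0∞) ≠ 0 := Nat.cast_ne_zero.mpr (Nat.one_le_iff_ne_zero.mp hN1)
    obtain ⟨i, hiF, hmin⟩ := Finset.exists_min_image (Finset.range N)
      (fun i => wInt w (ball (y i) δ₀)) ⟨0, Finset.mem_range.mpr hN1⟩
    have hNle : (N:ℝ≥0∞) * wInt w (ball (y i) δ₀) ≤ A := by
      calc (N:ℝ≥0∞) * wInt w (ball (y i) δ₀)
          = ∑ _j ∈ Finset.range N, wInt w (ball (y i) δ₀) := by
            rw [Finset.sum_const, Finset.card_range, nsmul_eq_mul]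
        _ ≤ ∑ j ∈ Finset.range N, wInt w (ball (y j) δ₀) :=
            Finset.sum_le_sum fun j hj => hmin j hj
        _ ≤ A := hsum
    have hwi : wInt w (ball (y i) δ₀) ≤ A / N :=
      (ENNReal.le_div_iff_mul_le (Or.inl hNne0) (Or.inl (ENNReal.natCast_ne_top N))).mpr
        (by rw [mul_comm]; exact hNle)
    refine ⟨y i, ?_⟩
    have key : ENNReal.ofReal (1/δ₀) / (N:ℝ≥0∞) ≤ ENNReal.ofReal (2/r) := by
      rw [ENNReal.div_le_iff_le_mul
        (Or.inl (Nat.cast_ne_zero.mpr (Nat.one_le_iff_ne_zero.mp hN1) : (N:ℝ≥0∞) ≠ 0))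
        (Or.inl (ENNReal.natCast_ne_top N))]
      rw [← ENNReal.ofReal_natCast N, ← ENNReal.ofReal_mul (by positivity)]
      apply ENNReal.ofReal_le_ofReal
      rw [show (2:ℝ)/r * N = 2*N/r by ring, div_le_div_iff₀ hδ₀ hrpos]
      linarith
    calc hB w (y i) δ₀ = ENNReal.ofReal (1/δ₀) * wInt w (ball (y i) δ₀) := rfl
      _ ≤ ENNReal.ofReal (1/δ₀) * (A / N) := mul_le_mul_right hwi _
      _ = ENNReal.ofReal (1/δ₀) / (N:ℝ≥0∞) * A := by
          simp only [div_eq_mul_inv]; ring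
      _ ≤ ENNReal.ofReal (2/r) * A := mul_le_mul_left key _
      _ = 2 * hB w x r := by
          rw [hB, ← hA, ← mul_assoc]
          congr 1
          rw [show (2:ℝ)/r = 2*(1/r) by ring, ENNReal.ofReal_mul (by norm_num)]
          norm_num
      
private lemma Hcont_anti {n : ℕ} (w : Eu n → ℝ) {δ δ' : ℝ≥0∞} (h : δ ≤ δ') (S : Set (Eu n)) :
    Hcont w δ' S ≤ Hcont w δ S := by
  rw [Hcont, Hcont]
  refine le_iInf fun c => le_iInf fun r => le_iInf fun h1 => le_iInf fun h2 => ?_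
  exact iInf_le_of_le c (iInf_le_of_le r (iInf_le_of_le
    (fun j => ⟨(h1 j).1, le_trans (h1 j).2 h⟩) (iInf_le_of_le h2 le_rfl)))

/-- For a doubling weight `w` with `lim_{r→∞} h(B(0,r)) = ∞`, a bounded set `B` satisfies
`ℋ^h(B) = 0` if and only if `ℋ^h_∞(B) = 0`. -/
theorem Hmeas_zero_iff_Hcont_zero {n : ℕ} (w : Eu n → ℝ) (C : ℝ) (hw : IsWeight w)
    (hdoub : IsDoublingWeight w C)
    (hgrowth : Filter.Tendsto (fun r : ℝ => hB w (0 : Eu n) r) Filter.atTop (nhds ⊤))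
    (B : Set (Eu n)) (hbdd : Bornology.IsBounded B) :
    Hmeas w B = 0 ↔ Hcont w ⊤ B = 0 := by
  constructor
  · intro h
    have h1 : Hcont w 1 B ≤ Hmeas w B := by
      rw [Hmeas]
      exact le_iSup₂ (f := fun (δ : ℝ≥0∞) (_ : 0 < δ) => Hcont w δ B) 1 one_pos
    exact le_antisymm (le_trans (Hcont_anti w le_top B) (h ▸ h1)) zero_le
  · intro h0
    have key : ∀ δ : ℝ≥0∞, 0 < δ → Hcont w δ B = 0 := by
      intro δ hδ
      obtain ⟨δ₀, hδ₀pos, hδ₀le⟩ : ∃ δ₀ : ℝ, 0 < δ₀ ∧ ENNReal.ofReal δ₀ ≤ δ := by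
        rcases eq_or_ne δ ⊤ with rfl | hδtop
        · exact ⟨1, one_pos, le_top⟩
        · exact ⟨δ.toReal, ENNReal.toReal_pos hδ.ne' hδtop,
            by rw [ENNReal.ofReal_toReal hδtop]⟩
      clear hδ
      cases n with
      | zero =>
          exfalso
          have hcompact : IsCompact (univ : Set (Eu 0)) := Set.finite_univ.isCompact
          have hint : Integrable w (volume : Measure (Eu 0)) :=
            integrableOn_univ.mp (hw.1.integrableOn_isCompact hcompact)
          have hMlt : (∫⁻ z, ENNReal.ofReal (w z) ∂(volume : Measure (Eu 0))) < ⊤ :=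
            hint.lintegral_lt_top
          set M := ∫⁻ z, ENNReal.ofReal (w z) ∂(volume : Measure (Eu 0)) with hM
          have h1 : ∀ᶠ r in (atTop : Filter ℝ), hB w 0 r ∈ Ioi M :=
            hgrowth (Ioi_mem_nhds hMlt)
          obtain ⟨T, hT⟩ := Filter.eventually_atTop.mp h1
          have h2 : hB w 0 (max T 1) ≤ M := by
            rw [hB]
            calc ENNReal.ofReal (1 / max T 1) * wInt w (ball 0 (max T 1))
                ≤ 1 * M := by
                  refine mul_le_mul' ?_ (setLIntegral_le_lintegral _ _)
                  rw [ENNReal.ofReal_le_one]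
                  rw [div_le_one (lt_of_lt_of_le one_pos (le_max_right T 1))]
                  exact le_max_right T 1
              _ = M := one_mul M
          exact absurd h2 (not_le.mpr (mem_Ioi.mp (hT _ (le_max_left _ _))))
      | succ m =>
          obtain ⟨c, hc0, hctop, hcball⟩ :=
            exists_lower_bound hw hdoub hgrowth hbdd hδ₀pos
          refine le_antisymm ?_ zero_le
          refine ENNReal.le_of_forall_pos_le_add fun ε hε _ => ?_
          rw [zero_add]
          set ε' : ℝ≥0∞ := min ((ε:ℝ≥0∞)/2) (c/2) with hε'def
          have hε'pos : 0 < ε' := lt_min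
            (ENNReal.div_pos (by exact_mod_cast hε.ne') ENNReal.ofNat_ne_top)
            (ENNReal.div_pos hc0.ne' ENNReal.ofNat_ne_top)
          have hε'c : ε' < c :=
            lt_of_le_of_lt (min_le_right _ _) (ENNReal.half_lt_self hc0.ne' hctop)
          have hlt : Hcont w ⊤ B < ε' := by rw [h0]; exact hε'pos
          rw [Hcont] at hlt
          simp only [iInf_lt_iff] at hlt
          obtain ⟨cs, rs, hcond, hcover, hsum⟩ := hlt
          have hrepl : ∀ j, ¬ rs j ≤ δ₀ →
              ∃ y : Eu (m+1), hB w y δ₀ ≤ 2 * hB w (cs j) (rs j) :=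
            fun j hj => exists_small_ball w hδ₀pos (cs j) (le_of_lt (not_le.mp hj))
          set cs' : ℕ → Eu (m+1) :=
            fun j => if hj : rs j ≤ δ₀ then cs j else (hrepl j hj).choose with hcs'
          set rs' : ℕ → ℝ := fun j => if rs j ≤ δ₀ then rs j else δ₀ with hrs'
          have hcond' : ∀ j, 0 < rs' j ∧ ENNReal.ofReal (rs' j) ≤ δ := by
            intro j
            simp only [hrs']
            split_ifs with hj
            · exact ⟨(hcond j).1, le_trans (ENNReal.ofReal_le_ofReal hj) hδ₀le⟩
            · exact ⟨hδ₀pos, hδ₀le⟩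
          have hbound' : ∀ j, hB w (cs' j) (rs' j) ≤ 2 * hB w (cs j) (rs j) := by
            intro j
            simp only [hcs', hrs']
            split_ifs with hj
            · exact le_mul_of_one_le_left zero_le one_le_two
            · exact (hrepl j hj).choose_spec
          have hcover' : B ⊆ ⋃ j, ball (cs' j) (rs' j) := by
            intro z hz
            obtain ⟨j, hj⟩ := mem_iUnion.mp (hcover hz)
            have hgood : rs j ≤ δ₀ := by
              by_contra hbad
              have hc1 : c ≤ hB w (cs j) (rs j) :=
                hcball (cs j) (rs j) (le_of_lt (not_le.mp hbad)) ⟨z, hj, hz⟩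
              have hc2 : hB w (cs j) (rs j) ≤ ∑' i, hB w (cs i) (rs i) :=
                ENNReal.le_tsum j
              exact absurd (le_trans hc1 hc2) (not_le.mpr (lt_trans hsum hε'c))
            refine mem_iUnion.mpr ⟨j, ?_⟩
            simp only [hcs', hrs']
            rw [dif_pos hgood, if_pos hgood]
            exact hj
          have hsum' : ∑' j, hB w (cs' j) (rs' j) ≤ (ε:ℝ≥0∞) := by
            calc ∑' j, hB w (cs' j) (rs' j)
                ≤ ∑' j, 2 * hB w (cs j) (rs j) := ENNReal.tsum_le_tsum hbound'
              _ = 2 * ∑' j, hB w (cs j) (rs j) := ENNReal.tsum_mul_left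
              _ ≤ 2 * ε' := mul_le_mul_right hsum.le _
              _ ≤ 2 * ((ε:ℝ≥0∞)/2) := mul_le_mul_right (min_le_left _ _) _
              _ = (ε:ℝ≥0∞) := by rw [two_mul, ENNReal.add_halves]
          calc Hcont w δ B ≤ ∑' j, hB w (cs' j) (rs' j) := by
                rw [Hcont]
                exact iInf_le_of_le cs' (iInf_le_of_le rs'
                  (iInf_le_of_le hcond' (iInf_le_of_le hcover' le_rfl)))
            _ ≤ (ε:ℝ≥0∞) := hsum'
    rw [Hmeas]
    exact le_antisymm (iSup₂_le fun δ hδ => (key δ hδ).le) zero_le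


end
end

section
/- Let w be a 1-admissible weight on ℝⁿ. Then for any x ∈ ℝⁿ and r > 0 there exists ρ ∈ [r, 2r] such that the weighted perimeter of the ball B(x,ρ) satisfies P_w(B(x,ρ)) ≤ C · h(B(x,ρ)) = (C/ρ)∫_{B(x,ρ)} w, where C > 0 depends only on the doubling constant of w and not on x or ρ. -/
open MeasureTheory Metric Filter Set ENNReal

noncomputable section

variable {n : ℕ}

open scoped Topology NNReal

/-- **Good radii for the weighted perimeter of balls.** If `w` is a `1`-admissible weight,
there is a constant `C > 0`, depending only on the doubling constant of `w`, such that for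
every `x ∈ ℝⁿ` and `r > 0` there exists `ρ ∈ [r, 2r]` with
`P_w(B(x,ρ)) ≤ C · h(B(x,ρ))`. -/
theorem exists_good_radius {n : ℕ} (w : Eu n → ℝ) (C_D : ℝ)
    (hadm : Admissible 1 w) (hdoub : IsDoublingWeight w C_D) :
    ∃ C > (0:ℝ), ∀ (x : Eu n) (r : ℝ), 0 < r →
      ∃ ρ ∈ Set.Icc r (2 * r),
        perim w (ball x ρ) ≤ ENNReal.ofReal C * hB w x ρ := by
  obtain ⟨hCD1, hCD⟩ := hdoub
  refine ⟨2 * (C_D ^ 2 + 1), by positivity, ?_⟩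
  intro x r hr
  obtain ⟨hw, -, -⟩ := hadm
  -- measurable version of the weight density
  have hwm : AEMeasurable w (volume : Measure (Eu n)) :=
    hw.1.aestronglyMeasurable.aemeasurable
  have hg : AEMeasurable (fun y => ENNReal.ofReal (w y)) (volume : Measure (Eu n)) :=
    ENNReal.measurable_ofReal.comp_aemeasurable hwm
  set f : Eu n → ℝ≥0∞ := hg.mk _ with hf
  have hfmeas : Measurable f := hg.measurable_mk
  set ν : Measure (Eu n) := (volume : Measure (Eu n)).withDensity f with hνdef
  have hν : ∀ s : Set (Eu n), MeasurableSet s → ν s = wInt w s := by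
    intro s hs
    rw [hνdef, withDensity_apply _ hs, wInt]
    exact lintegral_congr_ae (ae_restrict_of_ae hg.ae_eq_mk.symm)
  have hfin : ∀ R : ℝ, ν (closedBall x R) < ⊤ := by
    intro R
    rw [hν _ measurableSet_closedBall]
    have hint : IntegrableOn w (closedBall x R) volume :=
      hw.1.integrableOn_isCompact (isCompact_closedBall x R)
    calc wInt w (closedBall x R) ≤ ∫⁻ y in closedBall x R, (‖w y‖₊ : ℝ≥0∞) :=
          lintegral_mono fun y => Real.ofReal_le_enorm (w y)
      _ < ⊤ := hint.2
  -- positivity of the weighted measure of balls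
  have hBr_pos : 0 < ν (ball x r) := by
    rcases (zero_le : 0 ≤ ν (ball x r)).lt_or_eq with h | h
    · exact h
    exfalso
    rw [hν _ measurableSet_ball, wInt] at h
    have h0 : (fun y => ENNReal.ofReal (w y)) =ᵐ[volume.restrict (ball x r)] 0 :=
      (lintegral_eq_zero_iff' hg.restrict).1 h.symm
    have hpos : ∀ᵐ y ∂volume.restrict (ball x r), (0:ℝ) < w y := ae_restrict_of_ae hw.2
    have hFalse : ∀ᵐ _y ∂volume.restrict (ball x r), False := by
      filter_upwards [h0, hpos] with y h1 h2
      have : w y ≤ 0 := ENNReal.ofReal_eq_zero.1 h1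
      linarith
    have : volume.restrict (ball x r) = 0 :=
      MeasureTheory.ae_eq_bot.1 (Filter.eventually_false_iff_eq_bot.1 hFalse)
    have hb0 : (volume : Measure (Eu n)) (ball x r) = 0 := Measure.restrict_eq_zero.1 this
    exact (measure_ball_pos volume x hr).ne' hb0
  -- the pushforward measure on ℝ
  have hd : Measurable fun y : Eu n => dist y x :=
    (continuous_id.dist continuous_const).measurable
  set σ : Measure ℝ := (ν.restrict (closedBall x (2 * r))).map (fun y => dist y x) with hσdef
  have hmap : ∀ s : Set ℝ, MeasurableSet s →
      σ s = ν ((fun y => dist y x) ⁻¹' s ∩ closedBall x (2 * r)) := by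
    intro s hs
    rw [hσdef, Measure.map_apply hd hs, Measure.restrict_apply (hd hs)]
  haveI : IsFiniteMeasure σ := by
    constructor
    rw [hmap _ MeasurableSet.univ]
    exact lt_of_le_of_lt (measure_mono inter_subset_right) (hfin _)
  -- pigeonhole via differentiation of measures
  set M : ℝ≥0∞ := (σ (Icc r (2 * r)) + ν (ball x r)) / ENNReal.ofReal r with hMdef
  set v := IsUnifLocDoublingMeasure.vitaliFamily (volume : Measure ℝ) 1 with hv
  have hae : ∀ᵐ ρ ∂(volume : Measure ℝ),
      Tendsto (fun a => σ a / volume a) (v.filterAt ρ) (𝓝 (σ.rnDeriv volume ρ)) :=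
    VitaliFamily.ae_tendsto_rnDeriv v σ
  obtain ⟨ρ, hρmem, hρtend, hρle⟩ : ∃ ρ ∈ Ioo r (2 * r),
      Tendsto (fun a => σ a / volume a) (v.filterAt ρ) (𝓝 (σ.rnDeriv volume ρ)) ∧
        σ.rnDeriv volume ρ ≤ M := by
    by_contra hcon
    push_neg at hcon
    have hae' : ∀ᵐ ρ ∂(volume.restrict (Ioo r (2 * r))), M ≤ σ.rnDeriv volume ρ := by
      filter_upwards [ae_restrict_of_ae hae, ae_restrict_mem measurableSet_Ioo] with ρ h1 h2
      exact (hcon ρ h2 h1).le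
    have h1 : M * ENNReal.ofReal r ≤ σ (Icc r (2 * r)) := by
      have e1 : M * ENNReal.ofReal r = M * volume (Ioo r (2 * r)) := by
        have e0 : 2 * r - r = r := by ring
        rw [Real.volume_Ioo, e0]
      calc M * ENNReal.ofReal r = ∫⁻ _ρ in Ioo r (2 * r), M ∂volume := by
            rw [e1, setLIntegral_const]
        _ ≤ ∫⁻ ρ in Ioo r (2 * r), σ.rnDeriv volume ρ ∂volume := lintegral_mono_ae hae'
        _ ≤ σ (Ioo r (2 * r)) := Measure.setLIntegral_rnDeriv_le _
        _ ≤ σ (Icc r (2 * r)) := measure_mono Ioo_subset_Icc_self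
    have e2 : M * ENNReal.ofReal r = σ (Icc r (2 * r)) + ν (ball x r) := by
      rw [hMdef]
      exact ENNReal.div_mul_cancel (by simp [hr]) ENNReal.ofReal_ne_top
    rw [e2] at h1
    exact absurd h1 (ENNReal.lt_add_right (measure_ne_top σ _) hBr_pos.ne').not_ge
  have hρ0 : 0 < ρ := hr.trans hρmem.1
  refine ⟨ρ, ⟨hρmem.1.le, hρmem.2.le⟩, ?_⟩
  -- the ramp functions
  set ε : ℕ → ℝ := fun k => 1 / ((k : ℝ) + 1) with hε
  have hεpos : ∀ k, 0 < ε k := fun k => by positivity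
  set g : ℕ → ℝ → ℝ := fun k t => min (max (((k : ℝ) + 1) * (ρ - t)) 0) 1 with hgdef
  set Φ : ℕ → Eu n → ℝ := fun k => (g k) ∘ (fun y => dist y x) with hΦdef
  have hglip : ∀ k : ℕ, LipschitzWith ((k + 1 : ℝ≥0)) (g k) := by
    intro k
    have base : LipschitzWith ((k + 1 : ℝ≥0)) (fun t : ℝ => ((k : ℝ) + 1) * (ρ - t)) := by
      apply LipschitzWith.of_dist_le_mul
      intro a b
      rw [Real.dist_eq, Real.dist_eq]
      have e : ((k : ℝ) + 1) * (ρ - a) - ((k : ℝ) + 1) * (ρ - b) = ((k : ℝ) + 1) * (b - a) := by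
        ring
      rw [e, abs_mul, abs_of_nonneg (by positivity : (0:ℝ) ≤ (k : ℝ) + 1), abs_sub_comm]
      push_cast
      exact le_rfl
    exact (base.max_const 0).min_const 1
  have hΦlipW : ∀ k : ℕ, LipschitzWith ((k + 1 : ℝ≥0) * 1) (Φ k) := fun k =>
    (hglip k).comp (LipschitzWith.dist_left x)
  have hΦlip : ∀ k, IsLip (Φ k) := fun k => ⟨_, hΦlipW k⟩
  have hΦ0 : ∀ k y, ρ ≤ dist y x → Φ k y = 0 := by
    intro k y hy
    have h1 : ((k : ℝ) + 1) * (ρ - dist y x) ≤ 0 :=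
      mul_nonpos_of_nonneg_of_nonpos (by positivity) (by linarith)
    show min (max (((k : ℝ) + 1) * (ρ - dist y x)) 0) 1 = 0
    rw [max_eq_right h1, min_eq_left zero_le_one]
  have hΦ1 : ∀ k y, dist y x ≤ ρ - ε k → Φ k y = 1 := by
    intro k y hy
    have hk : (0:ℝ) < (k : ℝ) + 1 := by positivity
    have h1 : (1:ℝ) ≤ ((k : ℝ) + 1) * (ρ - dist y x) := by
      have hεle : ε k ≤ ρ - dist y x := by linarith
      have h2 : ((k : ℝ) + 1) * ε k ≤ ((k : ℝ) + 1) * (ρ - dist y x) :=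
        mul_le_mul_of_nonneg_left hεle hk.le
      have he : ((k : ℝ) + 1) * ε k = 1 := by
        rw [hε]
        field_simp
      linarith
    show min (max (((k : ℝ) + 1) * (ρ - dist y x)) 0) 1 = 1
    rw [min_eq_right (le_trans h1 (le_max_left _ _))]
  have hΦmem : ∀ k y, 0 ≤ Φ k y ∧ Φ k y ≤ 1 := by
    intro k y
    constructor
    · exact le_min (le_max_right _ _) zero_le_one
    · exact min_le_right _ _
  -- annuli
  set A : ℕ → Set (Eu n) := fun k => closedBall x ρ \ ball x (ρ - ε k) with hA
  set D : ℕ → Set (Eu n) := fun k => ball x ρ \ ball x (ρ - ε k) with hD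
  have hAmeas : ∀ k, MeasurableSet (A k) := fun k =>
    measurableSet_closedBall.diff measurableSet_ball
  have hDmeas : ∀ k, MeasurableSet (D k) := fun k =>
    measurableSet_ball.diff measurableSet_ball
  -- the derivative vanishes off the annulus
  have hfd0 : ∀ k, ∀ y, y ∉ A k → fderiv ℝ (Φ k) y = 0 := by
    intro k y hy
    rw [hA, mem_diff, not_and_or, not_not] at hy
    rcases hy with hy | hy
    · have hyU : y ∈ (closedBall x ρ)ᶜ := hy
      have hev : Φ k =ᶠ[𝓝 y] fun _ => (0:ℝ) := by
        filter_upwards [isClosed_closedBall.isOpen_compl.mem_nhds hyU] with z hz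
        exact hΦ0 k z (le_of_lt (by simpa [mem_closedBall, not_le] using hz))
      rw [hev.fderiv_eq]
      exact fderiv_const_apply 0
    · have hev : Φ k =ᶠ[𝓝 y] fun _ => (1:ℝ) := by
        filter_upwards [isOpen_ball.mem_nhds hy] with z hz
        exact hΦ1 k z (le_of_lt (mem_ball.1 hz))
      rw [hev.fderiv_eq]
      exact fderiv_const_apply 1
  have hfdle : ∀ k y, ‖fderiv ℝ (Φ k) y‖ ≤ (k : ℝ) + 1 := by
    intro k y
    have := norm_fderiv_le_of_lipschitz ℝ (hΦlipW k) (x₀ := y)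
    simpa using this
  -- gradient integral bound
  have hgrad : ∀ k, gradInt w (Φ k) ≤ ENNReal.ofReal ((k : ℝ) + 1) * ν (A k) := by
    intro k
    have hpt : ∀ y, ENNReal.ofReal (‖fderiv ℝ (Φ k) y‖ * w y) ≤
        (A k).indicator (fun y => ENNReal.ofReal (((k : ℝ) + 1) * w y)) y := by
      intro y
      by_cases hy : y ∈ A k
      · rw [indicator_of_mem hy]
        rcases le_or_gt 0 (w y) with hw0 | hw0
        · exact ENNReal.ofReal_le_ofReal (mul_le_mul_of_nonneg_right (hfdle k y) hw0)
        · have : ‖fderiv ℝ (Φ k) y‖ * w y ≤ 0 :=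
            mul_nonpos_of_nonneg_of_nonpos (norm_nonneg _) hw0.le
          rw [ENNReal.ofReal_eq_zero.2 this]
          exact zero_le
      · rw [indicator_of_notMem hy, hfd0 k y hy]
        simp
    calc gradInt w (Φ k)
        ≤ ∫⁻ y, (A k).indicator (fun y => ENNReal.ofReal (((k : ℝ) + 1) * w y)) y :=
          lintegral_mono hpt
      _ = ∫⁻ y in A k, ENNReal.ofReal (((k : ℝ) + 1) * w y) := lintegral_indicator (hAmeas k) _
      _ = ∫⁻ y in A k, ENNReal.ofReal ((k : ℝ) + 1) * ENNReal.ofReal (w y) := by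
          apply lintegral_congr
          intro y
          rw [ENNReal.ofReal_mul (by positivity)]
      _ = ENNReal.ofReal ((k : ℝ) + 1) * ∫⁻ y in A k, ENNReal.ofReal (w y) :=
          lintegral_const_mul' _ _ ENNReal.ofReal_ne_top
      _ = ENNReal.ofReal ((k : ℝ) + 1) * ν (A k) := by rw [hν _ (hAmeas k)]; rfl
  -- compare the annulus with an interval of the pushforward
  have hνA : ∀ k, ν (A k) ≤ σ (Icc (ρ - ε k) ρ) := by
    intro k
    rw [hmap _ measurableSet_Icc]
    apply measure_mono
    rintro y ⟨hy1, hy2⟩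
    have hd1 : dist y x ≤ ρ := mem_closedBall.1 hy1
    have hd2 : ρ - ε k ≤ dist y x := not_lt.1 (fun h => hy2 (mem_ball.2 h))
    exact ⟨⟨hd2, hd1⟩, mem_closedBall.2 (by linarith [hρmem.2.le])⟩
  -- the ratio sequence
  set b : ℕ → ℝ≥0∞ := fun k =>
    σ (Icc (ρ - ε k) ρ) / volume (Icc (ρ - ε k) ρ) with hbdef
  have hbk : ∀ k, b k = ENNReal.ofReal ((k : ℝ) + 1) * σ (Icc (ρ - ε k) ρ) := by
    intro k
    simp only [hbdef]
    have e1 : ρ - (ρ - ε k) = ε k := by ring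
    rw [Real.volume_Icc, e1, div_eq_mul_inv, ← ENNReal.ofReal_inv_of_pos (hεpos k)]
    have e2 : (ε k)⁻¹ = (k : ℝ) + 1 := by
      rw [hε]
      simp
    rw [e2, mul_comm]
  have htk : Tendsto (fun k : ℕ => ρ - ε k) atTop (𝓝[<] ρ) := by
    apply tendsto_nhdsWithin_of_tendsto_nhds_of_eventually_within
    · have h1 : Tendsto (fun k : ℕ => ρ - ε k) atTop (𝓝 (ρ - 0)) :=
        tendsto_const_nhds.sub tendsto_one_div_add_atTop_nhds_zero_nat
      simpa using h1
    · exact Filter.Eventually.of_forall fun k => sub_lt_self ρ (hεpos k)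
  have hbt : Tendsto b atTop (𝓝 (σ.rnDeriv volume ρ)) :=
    hρtend.comp ((Real.tendsto_Icc_vitaliFamily_left ρ).comp htk)
  -- liminf bound for the gradient integrals
  have hliminf : Filter.liminf (fun k => gradInt w (Φ k)) atTop ≤ M := by
    have hle : ∀ k, gradInt w (Φ k) ≤ b k := by
      intro k
      rw [hbk k]
      exact (hgrad k).trans (mul_le_mul_right (hνA k) _)
    calc Filter.liminf (fun k => gradInt w (Φ k)) atTop
        ≤ Filter.liminf b atTop := liminf_le_liminf (Filter.Eventually.of_forall hle)
      _ = σ.rnDeriv volume ρ := hbt.liminf_eq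
      _ ≤ M := hρle
  -- L¹ convergence of the ramps to the indicator
  have hL1 : Tendsto (fun k => ∫⁻ y, ENNReal.ofReal
      (|Φ k y - (ball x ρ).indicator (fun _ => (1:ℝ)) y| * w y)) atTop (𝓝 0) := by
    have hptD : ∀ k y, ENNReal.ofReal (|Φ k y - (ball x ρ).indicator (fun _ => (1:ℝ)) y| * w y) ≤
        (D k).indicator (fun y => ENNReal.ofReal (w y)) y := by
      intro k y
      by_cases hy : y ∈ D k
      · rw [indicator_of_mem hy]
        rcases le_or_gt 0 (w y) with hw0 | hw0
        · apply ENNReal.ofReal_le_ofReal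
          have h1 := hΦmem k y
          have h2 : (ball x ρ).indicator (fun _ => (1:ℝ)) y = 1 := indicator_of_mem hy.1 _
          have habs : |Φ k y - (ball x ρ).indicator (fun _ => (1:ℝ)) y| ≤ 1 := by
            rw [h2, abs_le]
            constructor <;> linarith [h1.1, h1.2]
          calc |Φ k y - (ball x ρ).indicator (fun _ => (1:ℝ)) y| * w y
              ≤ 1 * w y := mul_le_mul_of_nonneg_right habs hw0
            _ = w y := one_mul _
        · have : |Φ k y - (ball x ρ).indicator (fun _ => (1:ℝ)) y| * w y ≤ 0 :=
            mul_nonpos_of_nonneg_of_nonpos (abs_nonneg _) hw0.le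
          rw [ENNReal.ofReal_eq_zero.2 this]
          exact zero_le
      · have heq : Φ k y = (ball x ρ).indicator (fun _ => (1:ℝ)) y := by
          rw [hD, mem_diff, not_and_or, not_not] at hy
          rcases hy with hy | hy
          · rw [indicator_of_notMem hy]
            exact hΦ0 k y (not_lt.1 (by simpa [mem_ball] using hy))
          · have hyb : y ∈ ball x ρ := by
              have := mem_ball.1 hy
              exact mem_ball.2 (by linarith [hεpos k])
            rw [indicator_of_mem hyb]
            exact hΦ1 k y (mem_ball.1 hy).le
        rw [heq, sub_self, abs_zero, zero_mul, ENNReal.ofReal_zero]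
        exact zero_le
    have hle : ∀ k, (∫⁻ y, ENNReal.ofReal
        (|Φ k y - (ball x ρ).indicator (fun _ => (1:ℝ)) y| * w y)) ≤ ν (D k) := by
      intro k
      calc (∫⁻ y, ENNReal.ofReal (|Φ k y - (ball x ρ).indicator (fun _ => (1:ℝ)) y| * w y))
          ≤ ∫⁻ y, (D k).indicator (fun y => ENNReal.ofReal (w y)) y := lintegral_mono (hptD k)
        _ = ∫⁻ y in D k, ENNReal.ofReal (w y) := lintegral_indicator (hDmeas k) _
        _ = ν (D k) := by rw [hν _ (hDmeas k)]; rfl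
    have hanti : Antitone D := by
      intro i j hij
      apply diff_subset_diff_right
      apply ball_subset_ball
      have : ε j ≤ ε i := by
        rw [hε]
        apply one_div_le_one_div_of_le (by positivity)
        exact_mod_cast add_le_add_left (Nat.cast_le.2 hij) 1
      linarith
    have hDempty : (⋂ k, D k) = ∅ := by
      apply eq_empty_iff_forall_notMem.2
      intro y hy
      rw [mem_iInter] at hy
      have h0 : dist y x < ρ := mem_ball.1 (hy 0).1
      obtain ⟨k, hk⟩ := exists_nat_one_div_lt (sub_pos.2 h0)
      exact (hy k).2 (mem_ball.2 (by rw [hε] at *; simp only at hk ⊢; linarith))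
    have hDfin : ν (D 0) ≠ ⊤ :=
      ((measure_mono ((diff_subset).trans ball_subset_closedBall)).trans_lt (hfin ρ)).ne
    have hDtendsto : Tendsto (fun k => ν (D k)) atTop (𝓝 0) := by
      have h1 : Tendsto (ν ∘ D) atTop (𝓝 (ν (⋂ k, D k))) :=
        tendsto_measure_iInter_atTop (fun k => (hDmeas k).nullMeasurableSet) hanti ⟨0, hDfin⟩
      rw [hDempty, measure_empty] at h1
      exact h1
    exact tendsto_of_tendsto_of_tendsto_of_le_of_le tendsto_const_nhds hDtendsto
      (fun k => zero_le) hle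
  -- perimeter is at most the liminf
  have hperim : perim w (ball x ρ) ≤ Filter.liminf (fun k => gradInt w (Φ k)) atTop := by
    exact iInf_le_of_le Φ (iInf_le_of_le hΦlip (iInf_le_of_le hL1 le_rfl))
  -- the final estimate on M
  have hσuniv : σ (Icc r (2 * r)) ≤ ν (closedBall x (2 * r)) := by
    rw [hmap _ measurableSet_Icc]
    exact measure_mono inter_subset_right
  have hdb : ∀ t : ℝ, 0 < t → ν (ball x (2 * t)) ≤ ENNReal.ofReal C_D * ν (ball x t) := by
    intro t ht
    rw [hν _ measurableSet_ball, hν _ measurableSet_ball]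
    exact hCD x t ht
  have hcb : ν (closedBall x (2 * r)) ≤
      ENNReal.ofReal C_D * (ENNReal.ofReal C_D * ν (ball x r)) := by
    calc ν (closedBall x (2 * r)) ≤ ν (ball x (2 * (2 * r))) :=
          measure_mono (closedBall_subset_ball (by linarith))
      _ ≤ ENNReal.ofReal C_D * ν (ball x (2 * r)) := hdb (2 * r) (by linarith)
      _ ≤ ENNReal.ofReal C_D * (ENNReal.ofReal C_D * ν (ball x r)) :=
          mul_le_mul_right (hdb r hr) _
  have hMle : M ≤ ENNReal.ofReal (C_D ^ 2 + 1) * ν (ball x r) / ENNReal.ofReal r := by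
    apply ENNReal.div_le_div_right
    calc σ (Icc r (2 * r)) + ν (ball x r)
        ≤ ENNReal.ofReal C_D * (ENNReal.ofReal C_D * ν (ball x r)) + ν (ball x r) :=
          add_le_add_left (hσuniv.trans hcb) _
      _ = ENNReal.ofReal (C_D ^ 2 + 1) * ν (ball x r) := by
          rw [← mul_assoc, ← ENNReal.ofReal_mul (by linarith), ← sq,
            ENNReal.ofReal_add (by positivity) zero_le_one, ENNReal.ofReal_one,
            add_mul, one_mul]
  have hfinal : ENNReal.ofReal (C_D ^ 2 + 1) * ν (ball x r) / ENNReal.ofReal r ≤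
      ENNReal.ofReal (2 * (C_D ^ 2 + 1)) * hB w x ρ := by
    rw [hB, ← hν _ measurableSet_ball]
    rw [ENNReal.div_le_iff (by simp [hr]) ENNReal.ofReal_ne_top]
    have e1 : ENNReal.ofReal (2 * (C_D ^ 2 + 1) * (1 / ρ) * r) * ν (ball x ρ) =
        ENNReal.ofReal (2 * (C_D ^ 2 + 1)) * (ENNReal.ofReal (1 / ρ) * ν (ball x ρ)) *
        ENNReal.ofReal r := by
      rw [ENNReal.ofReal_mul (by positivity : (0:ℝ) ≤ 2 * (C_D ^ 2 + 1) * (1 / ρ)),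
        ENNReal.ofReal_mul (by positivity : (0:ℝ) ≤ 2 * (C_D ^ 2 + 1))]
      ring
    rw [← e1]
    apply mul_le_mul'
    · apply ENNReal.ofReal_le_ofReal
      have e2 : 2 * (C_D ^ 2 + 1) * (1 / ρ) * r = (C_D ^ 2 + 1) * (2 * r / ρ) := by
        ring
      rw [e2]
      apply le_mul_of_one_le_right (by positivity)
      exact (one_le_div hρ0).2 hρmem.2.le
    · exact measure_mono (ball_subset_ball hρmem.1.le)
  exact hperim.trans (hliminf.trans (hMle.trans hfinal))

end
end

section
/- Let w be a 1-admissible weight on ℝⁿ. If S ⊆ ℝⁿ is compact with ℋ^h(S) = 0, then for every ε > 0 and every open neighborhood U of S there exists an open set V, a finite union of balls, with S ⊆ V ⊂⊂ U and weighted perimeter P_w(V) ≤ ε. -/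
open MeasureTheory Metric Filter Set ENNReal

noncomputable section

variable {n : ℕ}

open NNReal Topology in
lemma wInt_eq (w : Eu n → ℝ) {s : Set (Eu n)} (hs : MeasurableSet s) :
    wInt w s = wMeasure w s := by
  rw [wMeasure, withDensity_apply _ hs]; rfl

lemma wMeasure_lt_top (w : Eu n → ℝ) (hw : MeasureTheory.LocallyIntegrable w volume)
    {K : Set (Eu n)} (hK : IsCompact K) : wMeasure w K < ⊤ := by
  have hint : IntegrableOn w K volume := hw.integrableOn_isCompact hK
  calc wMeasure w K ≤ wMeasure w (toMeasurable volume K) := measure_mono (subset_toMeasurable _ _)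
  _ = ∫⁻ x in toMeasurable volume K, ENNReal.ofReal (w x) :=
      (wInt_eq w (measurableSet_toMeasurable _ _)).symm
  _ < ⊤ := by
      have : IntegrableOn w (toMeasurable volume K) volume := by
        rwa [IntegrableOn, Measure.restrict_toMeasurable hK.measure_lt_top.ne]
      exact this.lintegral_lt_top

lemma wMeasure_ball_pos (w : Eu n → ℝ)
    (hpos : ∀ᵐ x ∂(volume : Measure (Eu n)), 0 < w x) (hw : MeasureTheory.LocallyIntegrable w volume)
    (c : Eu n) {r : ℝ} (hr : 0 < r) : 0 < wMeasure w (ball c r) := by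
  rcases eq_or_lt_of_le (zero_le : 0 ≤ wMeasure w (ball c r)) with h | h
  · exfalso
    have hg : AEMeasurable (fun x => ENNReal.ofReal (w x)) (volume.restrict (ball c r)) :=
      (ENNReal.measurable_ofReal.comp_aemeasurable hw.aestronglyMeasurable.aemeasurable).restrict
    have h0 : ∫⁻ x in ball c r, ENNReal.ofReal (w x) = 0 := by
      have := wInt_eq w (s := ball c r) measurableSet_ball
      rw [wInt] at this; rw [this]; exact h.symm
    have h1 := (lintegral_eq_zero_iff' hg).mp h0
    rw [Filter.EventuallyEq, ae_restrict_iff' measurableSet_ball] at h1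
    have h2 : ∀ᵐ x ∂(volume : Measure (Eu n)), x ∉ ball c r := by
      filter_upwards [h1, hpos] with x hx hwx hmem
      have := hx hmem
      simp only [Pi.zero_apply, ENNReal.ofReal_eq_zero] at this
      exact absurd hwx (not_lt.mpr this)
    exact (measure_ball_pos volume c hr).ne' (measure_eq_zero_iff_ae_notMem.mpr h2)
  · exact h

open NNReal Topology in
lemma radius_select (w : Eu n → ℝ) (hw : MeasureTheory.LocallyIntegrable w volume)
    (hpos : ∀ᵐ x ∂(volume : Measure (Eu n)), 0 < w x) (c : Eu n) {r : ℝ} (hr : 0 < r) :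
    ∃ t ∈ Ioo r (2*r), ∀ᶠ (m : ℕ) in atTop,
      ENNReal.ofReal (m+1) * wMeasure w (ball c (t + 2/(m+1)) \ ball c t)
        ≤ ENNReal.ofReal (16/r) * wMeasure w (ball c (2*r)) := by
  set μ := wMeasure w with hμ
  have hdistm : Measurable (fun y : Eu n => dist y c) :=
    (continuous_id.dist continuous_const).measurable
  set σ : Measure ℝ := Measure.map (fun y => dist y c) μ with hσ
  have hσball : ∀ a b : ℝ, σ (Iio b) = μ (ball c b) := by
    intro a b
    rw [hσ, Measure.map_apply hdistm measurableSet_Iio]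
    congr 1
  haveI : IsLocallyFiniteMeasure σ := by
    constructor
    intro x
    refine ⟨Iio (|x| + 1), Iio_mem_nhds (by cases abs_cases x <;> linarith), ?_⟩
    rw [hσball x]
    exact lt_of_le_of_lt (measure_mono ball_subset_closedBall)
      (wMeasure_lt_top w hw (isCompact_closedBall c _))
  set M := μ (ball c (2*r)) with hM
  have hM0 : M ≠ 0 := (wMeasure_ball_pos w hpos hw c (by linarith)).ne'
  have hMtop : M ≠ ⊤ := (lt_of_le_of_lt (measure_mono ball_subset_closedBall)
      (wMeasure_lt_top w hw (isCompact_closedBall c _))).ne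
  set R0 := ENNReal.ofReal r with hR0
  have hR00 : R0 ≠ 0 := by simp [hR0, hr]
  have hR0top : R0 ≠ ⊤ := ofReal_ne_top
  set L := 2 * M / R0 with hL
  have hL0 : L ≠ 0 := by
    simp only [hL, ne_eq, ENNReal.div_eq_zero_iff, mul_eq_zero, hR0top]
    push_neg
    exact ⟨by simp [hM0], by simp [hR0top]⟩
  have hLtop : L ≠ ⊤ := by
    simp only [hL, ne_eq, ENNReal.div_eq_top]
    push_neg
    exact ⟨fun _ => hR00, fun h => absurd h (ENNReal.mul_ne_top (by simp) hMtop)⟩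
  -- Chebyshev
  set bad := {t : ℝ | L ≤ σ.rnDeriv volume t} with hbad
  have hbadm : MeasurableSet bad := measurableSet_le measurable_const (Measure.measurable_rnDeriv σ volume)
  have cheb : L * volume (bad ∩ Ioo r (2*r)) ≤ M := by
    have h1 : L * (volume.restrict (Ioo r (2*r))) {t : ℝ | L ≤ σ.rnDeriv volume t}
        ≤ ∫⁻ t in Ioo r (2*r), σ.rnDeriv volume t :=
      mul_meas_ge_le_lintegral₀ (Measure.measurable_rnDeriv σ volume).aemeasurable L
    rw [Measure.restrict_apply hbadm] at h1
    refine le_trans h1 (le_trans (Measure.setLIntegral_rnDeriv_le _) ?_)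
    calc σ (Ioo r (2*r)) ≤ σ (Iio (2*r)) := measure_mono (fun x hx => hx.2)
    _ = M := hσball r (2*r)
  have hbadlt : volume (bad ∩ Ioo r (2*r)) < R0 := by
    by_contra hcon
    push_neg at hcon
    have h2 : L * R0 ≤ M := le_trans (mul_le_mul_right hcon L) cheb
    rw [hL, ENNReal.div_mul_cancel hR00 hR0top] at h2
    have h3 : M < 2 * M := by
      conv_lhs => rw [← one_mul M]
      exact ENNReal.mul_lt_mul_left hM0 hMtop one_lt_two
    exact absurd h2 (not_le.mpr h3)
  -- select a good point t
  have hbesi := Besicovitch.ae_tendsto_rnDeriv σ (volume : Measure ℝ)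
  set T := {t : ℝ | Tendsto (fun s => σ (closedBall t s) / volume (closedBall t s))
      (𝓝[>] 0) (𝓝 (σ.rnDeriv volume t))} with hT
  have hTc : volume {t : ℝ | t ∉ T} = 0 := hbesi
  have h4 : volume ((Ioo r (2*r) \ bad) ∩ T) ≠ 0 := by
    intro hz
    have hsub : Ioo r (2*r) ⊆ (bad ∩ Ioo r (2*r)) ∪ (((Ioo r (2*r) \ bad) ∩ T) ∪ {t : ℝ | t ∉ T}) := by
      intro t ht
      by_cases h1 : t ∈ bad
      · exact Or.inl ⟨h1, ht⟩
      by_cases h2 : t ∈ T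
      · exact Or.inr (Or.inl ⟨⟨ht, h1⟩, h2⟩)
      · exact Or.inr (Or.inr h2)
    have hmm := measure_mono (μ := (volume : Measure ℝ)) hsub
    have hb := le_trans hmm (le_trans (measure_union_le _ _)
      (add_le_add le_rfl (measure_union_le _ _)))
    rw [hz, hTc, add_zero, add_zero, Real.volume_Ioo] at hb
    have : (2*r - r) = r := by ring
    rw [this] at hb
    exact absurd hb (not_le.mpr hbadlt)
  obtain ⟨t, ⟨⟨htIoo, htbad⟩, htT⟩⟩ := nonempty_of_measure_ne_zero h4
  have hrn : σ.rnDeriv volume t < L := not_le.mp htbad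
  have hev : ∀ᶠ s in 𝓝[>] (0:ℝ), σ (closedBall t s) / volume (closedBall t s) < L :=
    htT.eventually_lt_const hrn
  have hseq : Tendsto (fun m : ℕ => 2/((m:ℝ)+1)) atTop (𝓝[>] (0:ℝ)) := by
    apply tendsto_nhdsWithin_of_tendsto_nhds_of_eventually_within
    · have h := (_root_.tendsto_const_div_atTop_nhds_zero_nat (𝕜 := ℝ) 2).comp (tendsto_add_atTop_nat 1)
      have heq : (fun m : ℕ => 2/((m:ℝ)+1)) = (fun m : ℕ => 2/(((m+1 : ℕ)):ℝ)) := by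
        funext m; push_cast; ring
      rw [heq]; exact h
    · exact Filter.Eventually.of_forall (fun m => by
        simp only [mem_Ioi]; positivity)
  refine ⟨t, htIoo, ?_⟩
  filter_upwards [hseq.eventually hev] with m hm2
  set s := 2/((m:ℝ)+1) with hs
  have hs0 : 0 < s := by positivity
  have keyann : μ (ball c (t + s) \ ball c t) = σ (Ico t (t+s)) := by
    rw [hσ, Measure.map_apply hdistm measurableSet_Ico]
    congr 1
    ext y
    simp only [mem_preimage, mem_Ico, mem_diff, mem_ball, not_lt]
    tauto
  have key2 : σ (Ico t (t+s)) ≤ σ (closedBall t s) := by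
    apply measure_mono
    intro u hu
    rw [Real.closedBall_eq_Icc]
    exact ⟨by linarith [hu.1], by linarith [hu.2]⟩
  have hcb : σ (closedBall t s) ≤ L * ENNReal.ofReal (2*s) := by
    rw [Real.volume_closedBall] at hm2
    refine le_of_lt ((ENNReal.div_lt_iff (Or.inl ?_) (Or.inl ofReal_ne_top)).mp hm2)
    simp only [ne_eq, ENNReal.ofReal_eq_zero, not_le]
    linarith
  calc ENNReal.ofReal ((m:ℝ)+1) * μ (ball c (t + s) \ ball c t)
      = ENNReal.ofReal ((m:ℝ)+1) * σ (Ico t (t+s)) := by rw [keyann]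
    _ ≤ ENNReal.ofReal ((m:ℝ)+1) * (L * ENNReal.ofReal (2*s)) :=
        mul_le_mul_right (le_trans key2 hcb) _
    _ = L * ENNReal.ofReal (((m:ℝ)+1) * (2*s)) := by
        rw [ENNReal.ofReal_mul (by positivity : (0:ℝ) ≤ (m:ℝ)+1)]; ring
    _ = L * ENNReal.ofReal 4 := by
        congr 2
        rw [hs]; field_simp; norm_num
    _ ≤ ENNReal.ofReal (16/r) * M := by
        rw [ENNReal.ofReal_div_of_pos hr, hL]
        have h4 : ENNReal.ofReal (4:ℝ) = 4 := by norm_num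
        have h16 : ENNReal.ofReal (16:ℝ) = 16 := by norm_num
        rw [h4, h16]
        have e1 : 2 * M / R0 * 4 = (8*M) / R0 := by
          rw [div_eq_mul_inv, div_eq_mul_inv]; ring
        have e2 : (16:ℝ≥0∞) / R0 * M = (16*M) / R0 := by
          rw [div_eq_mul_inv, div_eq_mul_inv]; ring
        rw [e1, e2]
        exact ENNReal.div_le_div_right (mul_le_mul_left (by norm_num) M) R0

open NNReal Topology in
lemma perim_le_sum (w : Eu n → ℝ) (hw : MeasureTheory.LocallyIntegrable w volume)
    {k : ℕ} (hk : 0 < k) (c : Fin k → Eu n) (ρ : Fin k → ℝ) (hρ : ∀ i, 0 < ρ i)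
    (K : Fin k → ℝ≥0∞)
    (hK : ∀ i, ∀ᶠ (m : ℕ) in atTop,
      ENNReal.ofReal ((m:ℝ)+1) *
        wMeasure w (ball (c i) (ρ i + 2/((m:ℝ)+1)) \ ball (c i) (ρ i)) ≤ K i) :
    perim w (⋃ i, ball (c i) (ρ i)) ≤ ∑ i, K i := by
  set V := ⋃ i, ball (c i) (ρ i) with hV
  have hVopen : IsOpen V := isOpen_iUnion (fun i => isOpen_ball)
  have hVne : V.Nonempty :=
    ⟨c ⟨0, hk⟩, mem_iUnion.mpr ⟨⟨0,hk⟩, mem_ball_self (hρ _)⟩⟩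
  have hVbdd : Bornology.IsBounded V :=
    Bornology.isBounded_iUnion.mpr (fun i => isBounded_ball)
  set u : Eu n → ℝ := Set.indicator V (fun _ => 1) with hu
  set φ : ℕ → Eu n → ℝ := fun j y => max (1 - ((j:ℝ)+1) * infDist y V) 0 with hφ
  -- Lipschitz
  have hlip : ∀ m : ℕ, LipschitzWith ((m:ℝ≥0)+1) (φ m) := by
    intro m
    have h1 : LipschitzWith 1 (fun x : Eu n => infDist x V) := lipschitz_infDist_pt V
    have h2 : LipschitzWith ((m:ℝ≥0)+1)
        (fun t : ℝ => max (1 - ((m:ℝ)+1)*t) 0) := by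
      apply LipschitzWith.of_dist_le_mul
      intro a b
      rw [Real.dist_eq, Real.dist_eq]
      refine le_trans (abs_max_sub_max_le_abs _ _ _) ?_
      have : (1 - ((m:ℝ)+1)*a) - (1 - ((m:ℝ)+1)*b) = ((m:ℝ)+1) * (b - a) := by ring
      rw [this, abs_mul, abs_of_nonneg (by positivity : (0:ℝ) ≤ (m:ℝ)+1), abs_sub_comm]
      push_cast
      rfl
    have h3 := h2.comp h1
    rw [mul_one] at h3
    exact h3
  -- pointwise values
  have hφ_mem : ∀ m x, x ∈ V → φ m x = 1 := by
    intro m x hx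
    simp [hφ, infDist_zero_of_mem hx]
  have hφ_zero : ∀ (m : ℕ) (x : Eu n), 1 ≤ ((m:ℝ)+1) * infDist x V → φ m x = 0 := by
    intro m x hx
    simp only [hφ]
    exact max_eq_right (by linarith)
  have hφ_mem01 : ∀ m x, 0 ≤ φ m x ∧ φ m x ≤ 1 := by
    intro m x
    refine ⟨le_max_right _ _, ?_⟩
    have h0 : 0 ≤ infDist x V := infDist_nonneg
    have : 1 - ((m:ℝ)+1) * infDist x V ≤ 1 := by nlinarith
    exact max_le this zero_le_one
  -- fderiv facts
  have hfd1 : ∀ (m : ℕ) (x : Eu n), x ∈ V → fderiv ℝ (φ m) x = 0 := by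
    intro m x hx
    have hev : φ m =ᶠ[𝓝 x] (fun _ => (1:ℝ)) := by
      filter_upwards [hVopen.mem_nhds hx] with y hy
      exact hφ_mem m y hy
    rw [hev.fderiv_eq]
    exact fderiv_const_apply 1
  have hfd2 : ∀ (m : ℕ) (x : Eu n), 1 < ((m:ℝ)+1) * infDist x V → fderiv ℝ (φ m) x = 0 := by
    intro m x hx
    have hWo : IsOpen {y : Eu n | 1 < ((m:ℝ)+1) * infDist y V} :=
      isOpen_lt continuous_const (continuous_const.mul (continuous_infDist_pt V))
    have hev : φ m =ᶠ[𝓝 x] (fun _ => (0:ℝ)) := by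
      filter_upwards [hWo.mem_nhds hx] with y hy
      exact hφ_zero m y (le_of_lt hy)
    rw [hev.fderiv_eq]
    exact fderiv_const_apply 0
  have hfd3 : ∀ (m : ℕ) (x : Eu n), ‖fderiv ℝ (φ m) x‖ ≤ (m:ℝ)+1 := by
    intro m x
    have h := norm_fderiv_le_of_lipschitz ℝ (f := φ m) (x₀ := x) (hlip m)
    calc ‖fderiv ℝ (φ m) x‖ ≤ (((m:ℝ≥0)+1 : ℝ≥0) : ℝ) := h
    _ = (m:ℝ)+1 := by push_cast; ring
  -- annuli
  set A : ℕ → Set (Eu n) := fun m => ⋃ i, (ball (c i) (ρ i + 2/((m:ℝ)+1)) \ ball (c i) (ρ i)) with hA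
  have hAmeas : ∀ m, MeasurableSet (A m) :=
    fun m => MeasurableSet.iUnion (fun i => measurableSet_ball.diff measurableSet_ball)
  have hgrad_le : ∀ m : ℕ, gradInt w (φ m)
      ≤ ∑ i, ENNReal.ofReal ((m:ℝ)+1) *
          wMeasure w (ball (c i) (ρ i + 2/((m:ℝ)+1)) \ ball (c i) (ρ i)) := by
    intro m
    have hpt : ∀ x, ENNReal.ofReal (‖fderiv ℝ (φ m) x‖ * w x)
        ≤ (A m).indicator (fun x => ENNReal.ofReal (((m:ℝ)+1) * w x)) x := by
      intro x
      by_cases hx1 : x ∈ V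
      · rw [hfd1 m x hx1]; simp
      by_cases hx2 : 1 < ((m:ℝ)+1) * infDist x V
      · rw [hfd2 m x hx2]; simp
      push_neg at hx2
      have hxA : x ∈ A m := by
        have hmpos : (0:ℝ) < (m:ℝ)+1 := by positivity
        have hinf : infDist x V < 2/((m:ℝ)+1) := by
          rw [lt_div_iff₀ hmpos]
          nlinarith [infDist_nonneg (x := x) (s := V)]
        obtain ⟨y, hyV, hxy⟩ := (infDist_lt_iff hVne).mp hinf
        obtain ⟨i, hyi⟩ := mem_iUnion.mp hyV
        refine mem_iUnion.mpr ⟨i, ⟨?_, fun hc => hx1 (mem_iUnion.mpr ⟨i, hc⟩)⟩⟩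
        rw [mem_ball] at hyi ⊢
        have htri := dist_triangle x y (c i)
        linarith
      rw [indicator_of_mem hxA]
      rcases le_or_gt 0 (w x) with hw0 | hw0
      · exact ENNReal.ofReal_le_ofReal (mul_le_mul_of_nonneg_right (hfd3 m x) hw0)
      · rw [ENNReal.ofReal_of_nonpos (mul_nonpos_of_nonneg_of_nonpos (norm_nonneg (fderiv ℝ (φ m) x)) hw0.le)]
        exact zero_le
    have hsplit : ∀ x : Eu n, ENNReal.ofReal (((m:ℝ)+1) * w x)
        = ENNReal.ofReal ((m:ℝ)+1) * ENNReal.ofReal (w x) :=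
      fun x => ENNReal.ofReal_mul (by positivity)
    calc gradInt w (φ m)
        ≤ ∫⁻ x, (A m).indicator (fun x => ENNReal.ofReal (((m:ℝ)+1) * w x)) x :=
          lintegral_mono hpt
      _ = ∫⁻ x in A m, ENNReal.ofReal (((m:ℝ)+1) * w x) := lintegral_indicator (hAmeas m) _
      _ = ENNReal.ofReal ((m:ℝ)+1) * ∫⁻ x in A m, ENNReal.ofReal (w x) := by
          simp_rw [hsplit]
          exact lintegral_const_mul' _ _ ofReal_ne_top
      _ = ENNReal.ofReal ((m:ℝ)+1) * wMeasure w (A m) := by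
          have hwi := wInt_eq w (hAmeas m)
          rw [wInt] at hwi
          rw [hwi]
      _ ≤ ENNReal.ofReal ((m:ℝ)+1) *
          ∑ i, wMeasure w (ball (c i) (ρ i + 2/((m:ℝ)+1)) \ ball (c i) (ρ i)) :=
          mul_le_mul_right (measure_iUnion_fintype_le _ _) _
      _ = ∑ i, ENNReal.ofReal ((m:ℝ)+1) *
          wMeasure w (ball (c i) (ρ i + 2/((m:ℝ)+1)) \ ball (c i) (ρ i)) := Finset.mul_sum _ _ _
  -- L¹ convergence
  set B : Set (Eu n) := cthickening 1 V with hB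
  have hBcomp : IsCompact B := isCompact_of_isClosed_isBounded isClosed_cthickening hVbdd.cthickening
  have hBmeas : MeasurableSet B := hBcomp.isClosed.measurableSet
  have hwaem : AEMeasurable w (volume : Measure (Eu n)) := hw.aestronglyMeasurable.aemeasurable
  have hum : Measurable u := measurable_const.indicator hVopen.measurableSet
  have hfrontier : volume (frontier V) = 0 := by
    have h1 : frontier V ⊆ ⋃ i, sphere (c i) (ρ i) := by
      intro x hx
      have hxc : x ∈ closure V := hx.1
      have hxn : x ∉ V := by
        rw [frontier, hVopen.interior_eq] at hx
        exact hx.2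
      have hcl : closure V ⊆ ⋃ i, closedBall (c i) (ρ i) :=
        closure_minimal (iUnion_mono (fun i => ball_subset_closedBall))
          (isClosed_iUnion_of_finite (fun i => isClosed_closedBall))
      obtain ⟨i, hi⟩ := mem_iUnion.mp (hcl hxc)
      refine mem_iUnion.mpr ⟨i, ?_⟩
      rw [← closedBall_diff_ball]
      exact ⟨hi, fun hc => hxn (mem_iUnion.mpr ⟨i, hc⟩)⟩
    refine measure_mono_null h1 ?_
    refine le_antisymm (le_trans (measure_iUnion_fintype_le _ _) ?_) zero_le
    have hz : ∀ i : Fin k, volume (sphere (c i) (ρ i)) = 0 :=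
      fun i => Measure.addHaar_sphere_of_ne_zero volume (c i) (hρ i).ne'
    simp [hz]
  have hconv : Tendsto (fun m => ∫⁻ x, ENNReal.ofReal (|φ m x - u x| * w x)) atTop (𝓝 0) := by
    rw [show (0:ℝ≥0∞) = ∫⁻ (_ : Eu n), (0:ℝ≥0∞) from lintegral_zero.symm]
    refine tendsto_lintegral_of_dominated_convergence'
      (B.indicator (fun x => ENNReal.ofReal (w x))) (fun m => ?_) (fun m => ?_) ?_ ?_
    · exact ENNReal.measurable_ofReal.comp_aemeasurable
        (((((hlip m).continuous.measurable.sub hum).abs).aemeasurable).mul hwaem)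
    · refine Filter.Eventually.of_forall (fun x => ?_)
      show ENNReal.ofReal (|φ m x - u x| * w x) ≤ B.indicator (fun x => ENNReal.ofReal (w x)) x
      by_cases hxB : x ∈ B
      · rw [indicator_of_mem hxB]
        rcases le_or_gt 0 (w x) with hw0 | hw0
        · refine ENNReal.ofReal_le_ofReal ?_
          have h1 : |φ m x - u x| ≤ 1 := by
            have h01 := hφ_mem01 m x
            have hu01 : u x = 0 ∨ u x = 1 := by
              by_cases hx : x ∈ V
              · right; simp [hu, indicator_of_mem hx]
              · left; simp [hu, indicator_of_notMem hx]
            rw [abs_le]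
            rcases hu01 with h|h <;> rw [h] <;> constructor <;> linarith [h01.1, h01.2]
          calc |φ m x - u x| * w x ≤ 1 * w x := mul_le_mul_of_nonneg_right h1 hw0
          _ = w x := one_mul _
        · rw [ENNReal.ofReal_of_nonpos (mul_nonpos_of_nonneg_of_nonpos (abs_nonneg (φ m x - u x)) hw0.le)]
          exact zero_le
      · have hxV : x ∉ V := fun h => hxB (self_subset_cthickening V h)
        have hxd : 1 ≤ infDist x V := by
          by_contra hcon
          push_neg at hcon
          obtain ⟨y, hyV, hxy⟩ := (infDist_lt_iff hVne).mp hcon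
          exact hxB (mem_cthickening_of_dist_le x y 1 V hyV hxy.le)
        have hφ0 : φ m x = 0 := by
          apply hφ_zero m x
          nlinarith [Nat.cast_nonneg (α := ℝ) m]
        have hux : u x = 0 := indicator_of_notMem hxV _
        rw [hφ0, hux]
        simp
    · rw [lintegral_indicator hBmeas]
      have hwi := wInt_eq w hBmeas
      rw [wInt] at hwi
      rw [hwi]
      exact (wMeasure_lt_top w hw hBcomp).ne
    · have hfr : ∀ᵐ x ∂(volume : Measure (Eu n)), x ∉ frontier V :=
        measure_eq_zero_iff_ae_notMem.mp hfrontier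
      filter_upwards [hfr] with x hx
      by_cases hxV : x ∈ V
      · apply tendsto_nhds_of_eventually_eq
        refine Filter.Eventually.of_forall (fun m => ?_)
        rw [hφ_mem m x hxV, hu, indicator_of_mem hxV]
        simp
      · have hxcl : x ∉ closure V := by
          intro hc
          exact hx ⟨hc, by rwa [hVopen.interior_eq]⟩
        have hpos : 0 < infDist x V :=
          lt_of_le_of_ne infDist_nonneg
            (Ne.symm (fun h => hxcl ((mem_closure_iff_infDist_zero hVne).mpr h)))
        apply tendsto_nhds_of_eventually_eq
        have harch : ∀ᶠ (m:ℕ) in atTop, 1 ≤ ((m:ℝ)+1) * infDist x V := by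
          obtain ⟨N, hN⟩ := exists_nat_gt (1 / infDist x V)
          filter_upwards [eventually_ge_atTop N] with m hm
          have hlt : (1:ℝ)/infDist x V < (m:ℝ)+1 := by
            have : (N:ℝ) ≤ (m:ℝ) := Nat.cast_le.mpr hm
            linarith
          rw [div_lt_iff₀ hpos] at hlt
          linarith
        filter_upwards [harch] with m hm
        rw [hφ_zero m x hm, hu, indicator_of_notMem hxV]
        simp
  -- conclude
  have hperim : perim w V ≤ liminf (fun m => gradInt w (φ m)) atTop := by
    rw [perim, varW]
    exact iInf_le_of_le φ (iInf_le_of_le (fun m => ⟨_, hlip m⟩) (iInf_le_of_le hconv le_rfl))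
  refine le_trans hperim ?_
  apply liminf_le_of_frequently_le'
  apply Filter.Eventually.frequently
  have hall : ∀ᶠ (m:ℕ) in atTop, ∀ i, ENNReal.ofReal ((m:ℝ)+1) *
      wMeasure w (ball (c i) (ρ i + 2/((m:ℝ)+1)) \ ball (c i) (ρ i)) ≤ K i :=
    eventually_all.mpr hK
  filter_upwards [hall] with m hm
  exact le_trans (hgrad_le m) (Finset.sum_le_sum (fun i _ => hm i))

/-- If `w` is `1`-admissible and `S` is compact with `ℋ^h(S) = 0`, then for every `ε > 0`
and every open neighborhood `U` of `S` there is an open set `V`, a finite union of balls,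
with `S ⊆ V ⊂⊂ U` and `P_w(V) ≤ ε`. -/
theorem exists_small_perimeter_nbhd {n : ℕ} (w : Eu n → ℝ) (hadm : Admissible 1 w)
    (S : Set (Eu n)) (hS : IsCompact S) (h0 : Hmeas w S = 0) :
    ∀ ε > (0:ℝ), ∀ U : Set (Eu n), IsOpen U → S ⊆ U →
      ∃ V : Set (Eu n),
        (∃ (k : ℕ) (c : Fin k → Eu n) (ρ : Fin k → ℝ),
          (∀ i, 0 < ρ i) ∧ V = ⋃ i, ball (c i) (ρ i)) ∧
        S ⊆ V ∧ closure V ⊆ U ∧ IsCompact (closure V) ∧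
        perim w V ≤ ENNReal.ofReal ε := by
  classical
  intro ε hε U hU hSU
  obtain ⟨hw, hpos⟩ := hadm.1
  obtain ⟨C, hC1, hCd⟩ := hadm.2.1
  rcases S.eq_empty_or_nonempty with hSe | hSne
  · -- empty case
    refine ⟨∅, ⟨0, Fin.elim0, Fin.elim0, fun i => i.elim0, by rw [iUnion_of_empty]⟩,
      by simp [hSe], by simp, by simp, ?_⟩
    have hle : perim w (∅ : Set (Eu n)) ≤ liminf (fun _ : ℕ => gradInt w (fun _ => 0)) atTop := by
      rw [perim, varW]
      refine iInf_le_of_le (fun _ _ => 0) (iInf_le_of_le (fun _ => ⟨0, LipschitzWith.const 0⟩)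
        (iInf_le_of_le ?_ le_rfl))
      have : ∀ m : ℕ, ∫⁻ x, ENNReal.ofReal (|(0:ℝ) - Set.indicator (∅ : Set (Eu n)) (fun _ => 1) x| * w x) = 0 := by
        intro m; simp
      simpa [this] using tendsto_const_nhds
    have hg : gradInt w (fun _ => (0:ℝ)) = 0 := by
      rw [gradInt]
      have : ∀ x : Eu n, fderiv ℝ (fun _ => (0:ℝ)) x = 0 := fun x => fderiv_const_apply 0
      simp [this]
    rw [hg] at hle
    rw [liminf_const (0:ℝ≥0∞)] at hle
    exact le_trans hle zero_le
  -- nonempty case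
  obtain ⟨d, hd, hdU⟩ := hS.exists_cthickening_subset_open hU hSU
  set δ := d/3 with hδdef
  have hδ : 0 < δ := by positivity
  -- content is zero at scale δ
  have hzero : Hcont w (ENNReal.ofReal δ) S = 0 := by
    refine le_antisymm ?_ zero_le
    rw [← h0, Hmeas]
    exact le_iSup₂ (f := fun δ' (_ : (0:ℝ≥0∞) < δ') => Hcont w δ' S)
      (ENNReal.ofReal δ) (ENNReal.ofReal_pos.mpr hδ)
  set η := ε / (16 * C) with hηdef
  have hη : 0 < η := by
    have : (0:ℝ) < 16 * C := by linarith
    positivity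
  have hlt : Hcont w (ENNReal.ofReal δ) S < ENNReal.ofReal η := by
    rw [hzero]; exact ENNReal.ofReal_pos.mpr hη
  rw [Hcont, iInf_lt_iff] at hlt
  obtain ⟨cs, hlt⟩ := hlt
  rw [iInf_lt_iff] at hlt
  obtain ⟨rs, hlt⟩ := hlt
  rw [iInf_lt_iff] at hlt
  obtain ⟨hcond, hlt⟩ := hlt
  rw [iInf_lt_iff] at hlt
  obtain ⟨hcov, hsum⟩ := hlt
  have hrpos : ∀ j, 0 < rs j := fun j => (hcond j).1
  have hrδ : ∀ j, rs j ≤ δ := fun j =>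
    (ENNReal.ofReal_le_ofReal_iff hδ.le).mp (hcond j).2
  -- finite subcover
  obtain ⟨t, ht⟩ := hS.elim_finite_subcover (fun j => ball (cs j) (rs j))
    (fun j => isOpen_ball) hcov
  set t' := t.filter (fun j => (S ∩ ball (cs j) (rs j)).Nonempty) with ht'def
  have ht'cov : S ⊆ ⋃ j ∈ t', ball (cs j) (rs j) := by
    intro x hx
    obtain ⟨j, hjt, hjx⟩ := mem_iUnion₂.mp (ht hx)
    exact mem_iUnion₂.mpr ⟨j, Finset.mem_filter.mpr ⟨hjt, ⟨x, hx, hjx⟩⟩, hjx⟩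
  have ht'ne : t'.Nonempty := by
    obtain ⟨x, hx⟩ := hSne
    obtain ⟨j, hjt, _⟩ := mem_iUnion₂.mp (ht'cov hx)
    exact ⟨j, hjt⟩
  -- good radii
  have hsel : ∀ j : ℕ, ∃ ρ' ∈ Ioo (rs j) (2 * rs j), ∀ᶠ (m : ℕ) in atTop,
      ENNReal.ofReal (m+1) * wMeasure w (ball (cs j) (ρ' + 2/(m+1)) \ ball (cs j) ρ')
        ≤ ENNReal.ofReal (16/(rs j)) * wMeasure w (ball (cs j) (2*(rs j))) :=
    fun j => radius_select w hw hpos (cs j) (hrpos j)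
  set ρ0 : ℕ → ℝ := fun j => (hsel j).choose with hρ0def
  have hρ0 : ∀ j, ρ0 j ∈ Ioo (rs j) (2 * rs j) := fun j => (hsel j).choose_spec.1
  have hρ0ev : ∀ j, ∀ᶠ (m : ℕ) in atTop,
      ENNReal.ofReal (m+1) * wMeasure w (ball (cs j) (ρ0 j + 2/(m+1)) \ ball (cs j) (ρ0 j))
        ≤ ENNReal.ofReal (16/(rs j)) * wMeasure w (ball (cs j) (2*(rs j))) :=
    fun j => (hsel j).choose_spec.2
  -- enumerate
  set k := t'.card with hkdef
  have hk : 0 < k := Finset.card_pos.mpr ht'ne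
  set e := t'.equivFin with hedef
  set cc : Fin k → Eu n := fun i => cs ((e.symm i) : ℕ) with hccdef
  set ρρ : Fin k → ℝ := fun i => ρ0 ((e.symm i) : ℕ) with hρρdef
  set V := ⋃ i, ball (cc i) (ρρ i) with hVdef
  have hρρpos : ∀ i, 0 < ρρ i := fun i =>
    lt_trans (hrpos _) (hρ0 ((e.symm i) : ℕ)).1
  -- S ⊆ V
  have hSV : S ⊆ V := by
    intro x hx
    obtain ⟨j, hjt, hjx⟩ := mem_iUnion₂.mp (ht'cov hx)
    refine mem_iUnion.mpr ⟨e ⟨j, hjt⟩, ?_⟩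
    have h1 : ((e.symm (e ⟨j, hjt⟩)) : ℕ) = j := by rw [Equiv.symm_apply_apply]
    simp only [hccdef, hρρdef, h1]
    exact ball_subset_ball (hρ0 j).1.le hjx
  -- closure V ⊆ U and compact
  have hVthick : V ⊆ cthickening d S := by
    intro x hx
    obtain ⟨i, hxi⟩ := mem_iUnion.mp hx
    set j := ((e.symm i) : ℕ) with hjdef
    have hjt' : j ∈ t' := (e.symm i).2
    obtain ⟨s, hsS, hsb⟩ := (Finset.mem_filter.mp hjt').2
    rw [mem_ball] at hsb
    have hxc : dist x (cs j) < ρ0 j := by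
      rw [mem_ball] at hxi
      exact hxi
    have h3 : dist x s ≤ d := by
      have h4 := dist_triangle x (cs j) s
      have h5 : dist (cs j) s < rs j := by rw [dist_comm]; exact hsb
      have h6 : ρ0 j < 2 * rs j := (hρ0 j).2
      have h7 : rs j ≤ δ := hrδ j
      rw [hδdef] at h7
      linarith
    exact mem_cthickening_of_dist_le x s d S hsS h3
  have hclV : closure V ⊆ U :=
    le_trans (closure_minimal hVthick (isClosed_cthickening)) hdU
  have hVbdd : Bornology.IsBounded V :=
    Bornology.isBounded_iUnion.mpr (fun i => isBounded_ball)
  have hclcomp : IsCompact (closure V) :=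
    isCompact_of_isClosed_isBounded isClosed_closure hVbdd.closure
  -- perimeter
  set Kf : Fin k → ℝ≥0∞ := fun i =>
    ENNReal.ofReal (16/(rs ((e.symm i) : ℕ))) *
      wMeasure w (ball (cc i) (2*(rs ((e.symm i) : ℕ)))) with hKfdef
  have hperim : perim w V ≤ ∑ i, Kf i := by
    rw [hVdef]
    refine perim_le_sum w hw hk cc ρρ hρρpos Kf (fun i => ?_)
    exact hρ0ev ((e.symm i) : ℕ)
  have hKle : ∀ i, Kf i ≤ ENNReal.ofReal (16*C) * hB w (cc i) (rs ((e.symm i) : ℕ)) := by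
    intro i
    set j := ((e.symm i) : ℕ) with hjdef
    have hdb := hCd (cc i) (rs j) (hrpos j)
    rw [wInt_eq w (measurableSet_ball (x := cc i) (ε := 2 * rs j)),
        wInt_eq w (measurableSet_ball (x := cc i) (ε := rs j))] at hdb
    have h1 : ENNReal.ofReal (16/(rs j)) = ENNReal.ofReal 16 * ENNReal.ofReal (1/(rs j)) := by
      rw [← ENNReal.ofReal_mul (by norm_num)]
      congr 1
      field_simp
    calc Kf i = ENNReal.ofReal (16/(rs j)) * wMeasure w (ball (cc i) (2*(rs j))) := rfl
    _ ≤ ENNReal.ofReal (16/(rs j)) * (ENNReal.ofReal C * wMeasure w (ball (cc i) (rs j))) :=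
        mul_le_mul_right hdb _
    _ = ENNReal.ofReal (16*C) * (ENNReal.ofReal (1/(rs j)) * wMeasure w (ball (cc i) (rs j))) := by
        rw [h1, ENNReal.ofReal_mul (by norm_num)]
        ring
    _ = ENNReal.ofReal (16*C) * hB w (cc i) (rs j) := by
        rw [hB, wInt_eq w measurableSet_ball]
  have hsum2 : ∑ i, Kf i ≤ ENNReal.ofReal (16*C) * ∑' j, hB w (cs j) (rs j) := by
    calc ∑ i, Kf i ≤ ∑ i, ENNReal.ofReal (16*C) * hB w (cc i) (rs ((e.symm i) : ℕ)) :=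
        Finset.sum_le_sum (fun i _ => hKle i)
    _ = ENNReal.ofReal (16*C) * ∑ i, hB w (cc i) (rs ((e.symm i) : ℕ)) :=
        (Finset.mul_sum _ _ _).symm
    _ = ENNReal.ofReal (16*C) * ∑ x : {x // x ∈ t'}, hB w (cs x) (rs x) := by
        congr 1
        exact Equiv.sum_comp e.symm (fun x : {x // x ∈ t'} => hB w (cs x) (rs x))
    _ = ENNReal.ofReal (16*C) * ∑ j ∈ t', hB w (cs j) (rs j) := by
        congr 1
        exact Finset.sum_coe_sort t' (fun j => hB w (cs j) (rs j))
    _ ≤ ENNReal.ofReal (16*C) * ∑' j, hB w (cs j) (rs j) :=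
        mul_le_mul_right (ENNReal.sum_le_tsum t') _
  have hfinal : perim w V ≤ ENNReal.ofReal ε := by
    refine le_trans hperim (le_trans hsum2 ?_)
    calc ENNReal.ofReal (16*C) * ∑' j, hB w (cs j) (rs j)
        ≤ ENNReal.ofReal (16*C) * ENNReal.ofReal η := mul_le_mul_right hsum.le _
      _ = ENNReal.ofReal (16*C*η) := by
          rw [← ENNReal.ofReal_mul (by linarith)]
      _ = ENNReal.ofReal ε := by
          congr 1
          rw [hηdef]
          field_simp
  exact ⟨V, ⟨k, cc, ρρ, hρρpos, rfl⟩, hSV, hclV, hclcomp, hfinal⟩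

end
end

section
/- Let w be a 1-admissible weight and let V' ⊂⊂ V ⊂⊂ U ⊂⊂ ℝⁿ be open sets with |∂V| = |∂V'| = 0. Then for every ε > 0 there exists a compactly supported Lipschitz function φ with supp φ ⊆ U, φ = 1 on V', and ∫_{ℝⁿ} |∇φ| w ≤ ε + 2 P_w(V). -/
open MeasureTheory Metric Filter Set ENNReal

noncomputable section

variable {n : ℕ}

section AuxLemmas

open Topology NNReal in
lemma aux_fderiv_zero {n : ℕ} {K : NNReal} {h : Eu n → ℝ} (hh : LipschitzWith K h)
    {s : Set (Eu n)} (hs : ∀ x ∈ s, h x = 0) :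
    ∀ᵐ x ∂(volume : Measure (Eu n)), x ∈ s → fderiv ℝ h x = 0 := by
  filter_upwards [ae_imp_of_ae_restrict
      (Besicovitch.ae_tendsto_measure_inter_div (volume : Measure (Eu n)) s),
    hh.ae_differentiableAt] with x hdens hdiff hxs
  have hD : HasFDerivAt h (fderiv ℝ h x) x := hdiff.hasFDerivAt
  ext v
  simp only [ContinuousLinearMap.zero_apply]
  -- key: for every ε > 0, |D v| ≤ K * ε
  have key : ∀ ε : ℝ, 0 < ε → |fderiv ℝ h x v| ≤ K * ε := by
    intro ε hε
    set S : ℝ := ‖v‖ + ε with hS_def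
    have hS : 0 < S := by positivity
    set q : ℝ≥0∞ := ENNReal.ofReal ((ε / S) ^ n) with hq_def
    have hq0 : 0 < q := ENNReal.ofReal_pos.2 (by positivity)
    have h1q : (1 : ℝ≥0∞) - q < 1 := ENNReal.sub_lt_self one_ne_top one_ne_zero hq0.ne'
    have hev1 : ∀ᶠ r in 𝓝[>] (0:ℝ),
        1 - q < volume (s ∩ closedBall x r) / volume (closedBall x r) :=
      (hdens hxs).eventually (eventually_gt_nhds h1q)
    have htS : Tendsto (fun t : ℝ => t * S) (𝓝[>] 0) (𝓝[>] 0) := by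
      apply tendsto_nhdsWithin_of_tendsto_nhds_of_eventually_within
      · have : Tendsto (fun t : ℝ => t * S) (𝓝 0) (𝓝 (0 * S)) :=
          (continuous_id.mul continuous_const).tendsto 0
        simpa using this.mono_left nhdsWithin_le_nhds
      · filter_upwards [self_mem_nhdsWithin] with t ht
        exact mul_pos ht hS
    have hev2 : ∀ᶠ t in 𝓝[>] (0:ℝ),
        1 - q < volume (s ∩ closedBall x (t * S)) / volume (closedBall x (t * S)) :=
      htS.eventually hev1
    -- main geometric claim
    have claim : ∀ t : ℝ, 0 < t →
        1 - q < volume (s ∩ closedBall x (t * S)) / volume (closedBall x (t * S)) →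
        ∃ y ∈ s, dist (x + t • v) y ≤ ε * t := by
      intro t ht hratio
      by_contra hcon
      push_neg at hcon
      have hdisj : s ∩ closedBall (x + t • v) (ε * t) = ∅ := by
        ext y; simp only [mem_inter_iff, mem_closedBall, mem_empty_iff_false, iff_false]
        rintro ⟨hys, hyb⟩
        exact absurd (by rwa [dist_comm] at hyb) (not_le.2 (hcon y hys))
      have hRpos : 0 < t * S := mul_pos ht hS
      have hsmall_sub : closedBall (x + t • v) (ε * t) ⊆ closedBall x (t * S) := by
        apply closedBall_subset_closedBall'
        have hd : dist (x + t • v) x = t * ‖v‖ := by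
          simp [dist_eq_norm, norm_smul, abs_of_pos ht]
        rw [hd]
        have heq : ε * t + t * ‖v‖ = t * S := by rw [hS_def]; ring
        exact le_of_eq heq
      set b := volume (closedBall x (t * S)) with hb_def
      set a := volume (closedBall (x + t • v) (ε * t)) with ha_def
      have hb0 : b ≠ 0 := (measure_closedBall_pos _ _ hRpos).ne'
      have hbT : b ≠ ⊤ := measure_closedBall_lt_top.ne
      have hexp : (ε / S) ^ n * (t * S) ^ n = (ε * t) ^ n := by
        rw [← mul_pow]; congr 1; field_simp
      have haqb : a = q * b := by
        rw [ha_def, hb_def, Measure.addHaar_closedBall' _ _ (by positivity : (0:ℝ) ≤ ε * t),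
          Measure.addHaar_closedBall' _ _ hRpos.le, finrank_euclideanSpace_fin, hq_def,
          ← mul_assoc, ← ENNReal.ofReal_mul (by positivity), hexp]
      have hq1 : q ≤ 1 := by
        rw [hq_def]
        refine ENNReal.ofReal_le_one.2 ?_
        have : ε / S ≤ 1 := by
          rw [div_le_one hS, hS_def]; linarith [norm_nonneg v]
        exact pow_le_one₀ (by positivity) this
      have hsub : volume (s ∩ closedBall x (t * S)) ≤ b - a := by
        have h1 : s ∩ closedBall x (t * S) ⊆ closedBall x (t * S) \ closedBall (x + t • v) (ε * t) := by
          intro y hy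
          refine ⟨hy.2, fun hyb => ?_⟩
          have : y ∈ s ∩ closedBall (x + t • v) (ε * t) := ⟨hy.1, hyb⟩
          rw [hdisj] at this; exact this
        refine (measure_mono h1).trans_eq ?_
        rw [measure_diff hsmall_sub measurableSet_closedBall.nullMeasurableSet
          (measure_closedBall_lt_top.ne)]
      have hba : b - a = (1 - q) * b := by
        rw [haqb, ENNReal.sub_mul (fun _ _ => hbT), one_mul]
      have hle : volume (s ∩ closedBall x (t * S)) / b ≤ 1 - q := by
        calc volume (s ∩ closedBall x (t * S)) / b ≤ (b - a) / b :=
              ENNReal.div_le_div_right hsub b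
          _ = (1 - q) * b / b := by rw [hba]
          _ = (1 - q) * (b / b) := by rw [mul_div_assoc]
          _ = 1 - q := by rw [ENNReal.div_self hb0 hbT, mul_one]
      exact absurd hratio (not_lt.2 hle)
    -- eventually bound on |h (x + t v)|
    have hev3 : ∀ᶠ t in 𝓝[>] (0:ℝ), |h (x + t • v)| ≤ K * ε * t := by
      filter_upwards [hev2, self_mem_nhdsWithin] with t hrat ht
      obtain ⟨y, hys, hdy⟩ := claim t ht hrat
      have h0 : h y = 0 := hs y hys
      have := hh.dist_le_mul (x + t • v) y
      rw [Real.dist_eq, h0, sub_zero] at this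
      calc |h (x + t • v)| ≤ K * dist (x + t • v) y := this
        _ ≤ K * (ε * t) := by
            exact mul_le_mul_of_nonneg_left hdy (K.coe_nonneg)
        _ = K * ε * t := by ring
    -- derivative along the line
    have hline : HasDerivAt (fun t : ℝ => h (x + t • v)) (fderiv ℝ h x v) 0 := by
      have h1 : HasDerivAt (fun t : ℝ => x + t • v) v 0 := by
        simpa using ((hasDerivAt_id (0:ℝ)).smul_const v).const_add x
      have h2 : HasFDerivAt h (fderiv ℝ h x) (x + (0:ℝ) • v) := by
        simpa using hD
      exact h2.comp_hasDerivAt 0 h1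
    have hx0 : h (x + (0:ℝ) • v) = 0 := by
      simpa using hs x hxs
    have hslope : Tendsto (fun t : ℝ => h (x + t • v) / t) (𝓝[>] 0) (𝓝 (fderiv ℝ h x v)) := by
      have := hasDerivAt_iff_tendsto_slope.1 hline
      have h2 : Tendsto (slope (fun t : ℝ => h (x + t • v)) 0) (𝓝[>] 0)
          (𝓝 (fderiv ℝ h x v)) :=
        this.mono_left (nhdsWithin_mono _ (fun y hy => ne_of_gt hy))
      refine h2.congr' ?_
      filter_upwards [self_mem_nhdsWithin] with t ht
      rw [slope_def_field]
      simp [hs x hxs]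
    have habs : Tendsto (fun t : ℝ => |h (x + t • v) / t|) (𝓝[>] 0)
        (𝓝 |fderiv ℝ h x v|) := hslope.abs
    refine le_of_tendsto habs ?_
    filter_upwards [hev3, self_mem_nhdsWithin] with t h3 ht
    rw [abs_div, abs_of_pos (show (0:ℝ) < t from ht), div_le_iff₀ (show (0:ℝ) < t from ht)]
    exact h3
  -- conclude D v = 0
  have : |fderiv ℝ h x v| ≤ 0 := by
    by_contra hcon
    push_neg at hcon
    have hKpos : (0:ℝ) < K + 1 := by positivity
    have hε : (0:ℝ) < |fderiv ℝ h x v| / (2 * (K + 1)) := by positivity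
    have hkey := key _ hε
    rw [mul_div_assoc'] at hkey
    rw [le_div_iff₀ (by positivity : (0:ℝ) < 2 * (↑K + 1))] at hkey
    nlinarith [K.coe_nonneg]
  exact abs_eq_zero.1 (le_antisymm this (abs_nonneg _))


open Topology NNReal in
lemma fderiv_ae_eqOn {n : ℕ} {K J : NNReal} {f g : Eu n → ℝ}
    (hf : LipschitzWith K f) (hg : LipschitzWith J g) {s : Set (Eu n)} (hs : Set.EqOn f g s) :
    ∀ᵐ x ∂(volume : Measure (Eu n)), x ∈ s → fderiv ℝ f x = fderiv ℝ g x := by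
  have h0 := aux_fderiv_zero (hf.sub hg) (s := s) (fun x hx => sub_eq_zero.2 (hs hx))
  filter_upwards [h0, hf.ae_differentiableAt, hg.ae_differentiableAt] with x h1 h2 h3 hxs
  have h4 : fderiv ℝ (fun y => f y - g y) x = fderiv ℝ f x - fderiv ℝ g x := fderiv_sub h2 h3
  have h5 := h1 hxs
  rw [h4] at h5
  exact sub_eq_zero.1 h5

open Topology NNReal in
lemma fderiv_ae_eq_const {n : ℕ} {K : NNReal} {f : Eu n → ℝ} (hf : LipschitzWith K f)
    {s : Set (Eu n)} {c : ℝ} (hs : ∀ x ∈ s, f x = c) :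
    ∀ᵐ x ∂(volume : Measure (Eu n)), x ∈ s → fderiv ℝ f x = 0 := by
  have := fderiv_ae_eqOn hf (LipschitzWith.const' c (K := 0)) (s := s) (fun x hx => hs x hx)
  filter_upwards [this] with x hx hxs
  rw [hx hxs, fderiv_fun_const]
  rfl

open Topology NNReal in
lemma exists_cutoff {n : ℕ} {K U : Set (Eu n)} (hK : IsCompact K) (hU : IsOpen U) (hKU : K ⊆ U) :
    ∃ (L : NNReal) (η : Eu n → ℝ), LipschitzWith L η ∧ (∀ x ∈ K, η x = 1) ∧
      tsupport η ⊆ U ∧ ∀ x, 0 ≤ η x ∧ η x ≤ 1 := by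
  rcases K.eq_empty_or_nonempty with rfl | hne
  · refine ⟨0, fun _ => 0, LipschitzWith.const' 0, by simp, ?_, by simp⟩
    have : Function.support (fun _ : Eu n => (0:ℝ)) = ∅ := by simp [Function.support]
    simp [tsupport, this]
  · obtain ⟨δ, hδ, hth⟩ := hK.exists_thickening_subset_open hU hKU
    have hc : 0 < δ / 2 := by linarith
    set c := δ / 2 with hc_def
    set η : Eu n → ℝ := fun x => max 0 (1 - infDist x K / c) with hη_def
    have l1 : LipschitzWith (Real.toNNReal c⁻¹) (fun t : ℝ => max 0 (1 - t / c)) := by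
      apply LipschitzWith.of_dist_le_mul
      intro a b
      have h1 : dist (max 0 (1 - a / c)) (max 0 (1 - b / c)) ≤ dist (1 - a / c) (1 - b / c) := by
        rw [Real.dist_eq, Real.dist_eq, max_comm 0 (1 - a / c), max_comm 0 (1 - b / c)]
        exact abs_max_sub_max_le_abs _ _ _
      refine h1.trans ?_
      rw [Real.dist_eq, Real.dist_eq, Real.coe_toNNReal _ (by positivity)]
      have : (1 - a / c) - (1 - b / c) = (b - a) / c := by field_simp; ring
      rw [this, abs_div, abs_of_pos hc, abs_sub_comm, div_eq_mul_inv, mul_comm]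
    have hlip : LipschitzWith (Real.toNNReal c⁻¹ * 1) η :=
      l1.comp (lipschitz_infDist_pt K)
    refine ⟨_, η, hlip, ?_, ?_, ?_⟩
    · intro x hx
      rw [hη_def]
      simp only
      rw [infDist_zero_of_mem hx]
      simp
    · have hsupp : Function.support η ⊆ {x | infDist x K ≤ c} := by
        intro x hx
        simp only [Function.mem_support, hη_def] at hx
        by_contra hcon
        simp only [mem_setOf_eq, not_le] at hcon
        apply hx
        rw [max_eq_left]
        have : 1 ≤ infDist x K / c := by
          rw [le_div_iff₀ hc]; linarith
        linarith
      have hclosed : IsClosed {x : Eu n | infDist x K ≤ c} :=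
        isClosed_le (continuous_infDist_pt K) continuous_const
      have h2 : tsupport η ⊆ {x | infDist x K ≤ c} := closure_minimal hsupp hclosed
      refine h2.trans (fun x hx => hth ?_)
      rw [mem_thickening_iff_infDist_lt hne]
      exact lt_of_le_of_lt hx (by rw [hc_def]; linarith)
    · intro x
      constructor
      · exact le_max_left _ _
      · apply max_le zero_le_one
        have : 0 ≤ infDist x K / c := div_nonneg infDist_nonneg hc.le
        linarith


end AuxLemmas

/-- **Smoothing of characteristic functions.** Let `w` be `1`-admissible and
`V' ⊂⊂ V ⊂⊂ U ⊂⊂ ℝⁿ` open with `|∂V| = |∂V'| = 0`. For every `ε > 0` there is a compactly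
supported Lipschitz `φ` with `supp φ ⊆ U`, `φ = 1` on `V'` and `∫|∇φ| w ≤ ε + 2 P_w(V)`. -/
theorem smoothing {n : ℕ} (w : Eu n → ℝ) (hadm : Admissible 1 w)
    (V' V U : Set (Eu n)) (hV' : IsOpen V') (hV : IsOpen V) (hU : IsOpen U)
    (hV'V : closure V' ⊆ V) (hV'c : IsCompact (closure V'))
    (hVU : closure V ⊆ U) (hVc : IsCompact (closure V))
    (hUc : IsCompact (closure U))
    (hfrV : volume (frontier V) = 0) (hfrV' : volume (frontier V') = 0) :
    ∀ ε > (0:ℝ), ∃ φ : Eu n → ℝ, LipTest φ ∧ tsupport φ ⊆ U ∧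
      (∀ x ∈ V', φ x = 1) ∧
      gradInt w φ ≤ ENNReal.ofReal ε + 2 * perim w V := by
  intro ε hε
  obtain ⟨L₁, η, hηlip, hη1, hηsupp, hη01⟩ := exists_cutoff hV'c hV hV'V
  obtain ⟨L₂, ζ, hζlip, hζ1, hζsupp, hζ01⟩ := exists_cutoff hVc hU hVU
  by_cases hfin : perim w V = ⊤
  · refine ⟨ζ, ⟨⟨L₂, hζlip⟩, ?_⟩, hζsupp, ?_, ?_⟩
    · exact hUc.of_isClosed_subset (isClosed_tsupport ζ) (hζsupp.trans subset_closure)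
    · intro x hx
      exact hζ1 x (subset_closure (hV'V (subset_closure hx)))
    · rw [hfin, ENNReal.mul_top (by norm_num)]
      simp
  · -- main case
    have hlt : perim w V < perim w V + ENNReal.ofReal (ε/4) :=
      ENNReal.lt_add_right hfin (ENNReal.ofReal_pos.2 (by positivity)).ne'
    have hlt2 : varW w (Set.indicator V (fun _ => (1:ℝ))) < perim w V + ENNReal.ofReal (ε/4) := hlt
    rw [varW] at hlt2
    simp only [iInf_lt_iff] at hlt2
    obtain ⟨φs, hlipseq, htend, hlim⟩ := hlt2
    set χ : Eu n → ℝ := Set.indicator V (fun _ => (1:ℝ)) with hχ_def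
    set Lr : ℝ := max (L₁:ℝ) (L₂:ℝ) with hLr_def
    have hLr0 : (0:ℝ) ≤ Lr := le_max_of_le_left L₁.coe_nonneg
    set C : ℝ := 4 * (Lr + 1) with hC_def
    have hC : 0 < C := by positivity
    have hfreq : ∃ᶠ k in Filter.atTop, gradInt w (φs k) < perim w V + ENNReal.ofReal (ε/4) :=
      frequently_lt_of_liminf_lt (h := hlim)
    have hevent := htend.eventually_lt_const
      (show (0:ℝ≥0∞) < ENNReal.ofReal (ε/(2*C)) from ENNReal.ofReal_pos.2 (by positivity))
    obtain ⟨k, hk1, hk2⟩ := (hfreq.and_eventually hevent).exists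
    obtain ⟨Kf, hKf⟩ := hlipseq k
    set f : Eu n → ℝ := φs k with hf_def
    -- the truncation g and the combination φ
    have hblip : LipschitzWith (2 * Kf) (fun x => 2 * f x - 1/2) := by
      have h2 : LipschitzWith 2 (fun t : ℝ => 2 * t - 1/2) := by
        apply LipschitzWith.of_dist_le_mul
        intro a b
        rw [Real.dist_eq, Real.dist_eq,
          show 2*a - 1/2 - (2*b - 1/2) = 2*(a-b) by ring, abs_mul, abs_two]
        push_cast
        exact le_refl _
      exact h2.comp hKf
    set g : Eu n → ℝ := fun x => min 1 (max 0 (2 * f x - 1/2)) with hg_def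
    have hglip : LipschitzWith (max 0 (max 0 (2 * Kf))) g :=
      (LipschitzWith.const' 1).min ((LipschitzWith.const' 0).max hblip)
    have hg0 : ∀ x, f x ≤ 1/4 → g x = 0 := by
      intro x hx
      rw [hg_def]
      simp only
      rw [max_eq_left (by linarith), min_eq_right zero_le_one]
    have hg1v : ∀ x, 3/4 ≤ f x → g x = 1 := by
      intro x hx
      rw [hg_def]
      simp only
      rw [min_eq_left (le_max_of_le_right (by linarith))]
    have hg01 : ∀ x, 0 ≤ g x ∧ g x ≤ 1 := fun x =>
      ⟨le_min zero_le_one (le_max_left _ _), min_le_left _ _⟩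
    set m : Eu n → ℝ := fun x => max (η x) (g x) with hm_def
    set φ : Eu n → ℝ := fun x => min (ζ x) (m x) with hφ_def
    have hmlip : LipschitzWith _ m := hηlip.max hglip
    have hφlip : LipschitzWith _ φ := hζlip.min hmlip
    have hm0 : ∀ x, 0 ≤ m x := fun x => le_max_of_le_left (hη01 x).1
    -- support of φ
    have hφsupp : Function.support φ ⊆ Function.support ζ := by
      intro x hx
      simp only [Function.mem_support] at hx ⊢
      intro hζ0
      apply hx
      rw [hφ_def]
      simp only
      rw [hζ0, min_eq_left (hm0 x)]
    have htsuppU : tsupport φ ⊆ U := (closure_mono hφsupp).trans hζsupp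
    have hφcompact : HasCompactSupport φ :=
      hUc.of_isClosed_subset (isClosed_tsupport φ) (htsuppU.trans subset_closure)
    -- φ = 1 on V'
    have hφ1 : ∀ x ∈ V', φ x = 1 := by
      intro x hx
      have h1 : η x = 1 := hη1 x (subset_closure hx)
      have h2 : ζ x = 1 := hζ1 x (subset_closure (hV'V (subset_closure hx)))
      rw [hφ_def]
      simp only
      rw [hm_def]
      simp only
      rw [h1, h2, max_eq_left (hg01 x).2, min_self]
    -- a.e. derivative facts
    have F1 := fderiv_ae_eqOn hφlip hζlip (s := {y | ζ y ≤ m y})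
      (fun y hy => min_eq_left hy)
    have F2 := fderiv_ae_eqOn hφlip hmlip (s := {y | m y ≤ ζ y})
      (fun y hy => min_eq_right hy)
    have F3 := fderiv_ae_eqOn hmlip hglip (s := {y | η y ≤ g y})
      (fun y hy => max_eq_right hy)
    have F4 := fderiv_ae_eqOn hmlip hηlip (s := {y | g y ≤ η y})
      (fun y hy => max_eq_left hy)
    have F5 := fderiv_ae_eq_const hglip (s := {y | f y ≤ 1/4}) (c := 0)
      (fun y hy => hg0 y hy)
    have F6 := fderiv_ae_eq_const hglip (s := {y | 3/4 ≤ f y}) (c := 1)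
      (fun y hy => hg1v y hy)
    have F7 := fderiv_ae_eqOn hglip hblip (s := {y | 1/4 ≤ f y ∧ f y ≤ 3/4})
      (by
        intro y hy
        rw [hg_def]
        simp only
        rw [max_eq_right (by linarith [hy.1]), min_eq_right (by linarith [hy.2])])
    have F8 : ∀ᵐ x ∂(volume : Measure (Eu n)),
        fderiv ℝ (fun y => 2 * f y - 1/2) x = (2:ℝ) • fderiv ℝ f x := by
      filter_upwards [hKf.ae_differentiableAt] with x hx
      rw [fderiv_sub_const, fderiv_const_mul hx]
    have F9 := fderiv_ae_eq_const hζlip (s := {y | ζ y = 1}) (c := 1) (fun y hy => hy)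
    have F10 := fderiv_ae_eq_const hζlip (s := {y | ζ y = 0}) (c := 0) (fun y hy => hy)
    have F11 := fderiv_ae_eq_const hηlip (s := {y | η y = 1}) (c := 1) (fun y hy => hy)
    have F12 := fderiv_ae_eq_const hηlip (s := {y | η y = 0}) (c := 0) (fun y hy => hy)
    -- master pointwise bound
    have master : ∀ᵐ x ∂(volume : Measure (Eu n)),
        ENNReal.ofReal (‖fderiv ℝ φ x‖ * w x) ≤
          2 * ENNReal.ofReal (‖fderiv ℝ f x‖ * w x) +
            ENNReal.ofReal C * ENNReal.ofReal (|f x - χ x| * w x) := by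
      filter_upwards [F1, F2, F3, F4, F5, F6, F7, F8, F9, F10, F11, F12]
        with x f1 f2 f3 f4 f5 f6 f7 f8 f9 f10 f11 f12
      by_cases hw : 0 ≤ w x
      case neg =>
        rw [ENNReal.ofReal_eq_zero.2
          (mul_nonpos_of_nonneg_of_nonpos (norm_nonneg _) (le_of_not_ge hw))]
        exact zero_le
      have hA : (0:ℝ) ≤ 2 * (‖fderiv ℝ f x‖ * w x) := by
        have := mul_nonneg (norm_nonneg (fderiv ℝ f x)) hw
        linarith
      have hB : (0:ℝ) ≤ C * (|f x - χ x| * w x) :=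
        mul_nonneg hC.le (mul_nonneg (abs_nonneg _) hw)
      suffices hreal : ‖fderiv ℝ φ x‖ * w x ≤
          2 * (‖fderiv ℝ f x‖ * w x) + C * (|f x - χ x| * w x) by
        calc ENNReal.ofReal (‖fderiv ℝ φ x‖ * w x)
            ≤ ENNReal.ofReal (2 * (‖fderiv ℝ f x‖ * w x) + C * (|f x - χ x| * w x)) :=
              ENNReal.ofReal_le_ofReal hreal
          _ = ENNReal.ofReal (2 * (‖fderiv ℝ f x‖ * w x)) +
              ENNReal.ofReal (C * (|f x - χ x| * w x)) := ENNReal.ofReal_add hA hB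
          _ = 2 * ENNReal.ofReal (‖fderiv ℝ f x‖ * w x) +
              ENNReal.ofReal C * ENNReal.ofReal (|f x - χ x| * w x) := by
              rw [ENNReal.ofReal_mul (by norm_num : (0:ℝ) ≤ 2),
                ENNReal.ofReal_mul hC.le, ENNReal.ofReal_ofNat]
      -- helper for the zero cases
      have hzero : fderiv ℝ φ x = 0 →
          ‖fderiv ℝ φ x‖ * w x ≤ 2 * (‖fderiv ℝ f x‖ * w x) + C * (|f x - χ x| * w x) := by
        intro hz
        rw [hz, norm_zero, zero_mul]
        linarith
      -- helper for the cutoff-gradient cases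
      have hbad : ∀ L : ℝ, L ≤ Lr → ‖fderiv ℝ φ x‖ ≤ L → 1/4 ≤ |f x - χ x| →
          ‖fderiv ℝ φ x‖ * w x ≤ 2 * (‖fderiv ℝ f x‖ * w x) + C * (|f x - χ x| * w x) := by
        intro L hL hnorm hΔ
        have h1 : ‖fderiv ℝ φ x‖ * w x ≤ (Lr + 1) * w x :=
          mul_le_mul_of_nonneg_right (by linarith) hw
        have h2 : (Lr + 1) * w x = C * (1/4 * w x) := by rw [hC_def]; ring
        have h3 : C * (1/4 * w x) ≤ C * (|f x - χ x| * w x) :=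
          mul_le_mul_of_nonneg_left (mul_le_mul_of_nonneg_right hΔ hw) hC.le
        linarith
      have hnζ : ‖fderiv ℝ ζ x‖ ≤ (L₂:ℝ) := norm_fderiv_le_of_lipschitz ℝ hζlip
      have hnη : ‖fderiv ℝ η x‖ ≤ (L₁:ℝ) := norm_fderiv_le_of_lipschitz ℝ hηlip
      rcases le_total (ζ x) (m x) with hc | hc
      · -- φ = ζ branch
        have hd : fderiv ℝ φ x = fderiv ℝ ζ x := f1 hc
        by_cases h1 : ζ x = 1
        · exact hzero (by rw [hd, f9 h1])
        by_cases h0 : ζ x = 0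
        · exact hzero (by rw [hd, f10 h0])
        -- 0 < ζ x < 1
        have hζpos : 0 < ζ x := lt_of_le_of_ne (hζ01 x).1 (Ne.symm h0)
        have hxnV : x ∉ closure V := fun hxV => h1 (hζ1 x hxV)
        have hχ0 : χ x = 0 := by
          rw [hχ_def]
          exact Set.indicator_of_notMem (fun hxV => hxnV (subset_closure hxV)) _
        have hηx : η x = 0 := by
          by_contra hcon
          have : x ∈ tsupport η := subset_closure (Function.mem_support.2 hcon)
          exact hxnV (subset_closure (hηsupp this))
        have hmg : m x = g x := by
          rw [hm_def]
          simp only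
          rw [hηx, max_eq_right (hg01 x).1]
        have hgpos : 0 < g x := by rw [← hmg]; exact lt_of_lt_of_le hζpos hc
        have hf14 : 1/4 < f x := by
          by_contra hcon
          push_neg at hcon
          rw [hg0 x hcon] at hgpos
          exact lt_irrefl _ hgpos
        have hΔ : 1/4 ≤ |f x - χ x| := by
          rw [hχ0, sub_zero]
          exact le_trans hf14.le (le_abs_self _)
        exact hbad (L₂:ℝ) (le_max_right _ _) (by rw [hd]; exact hnζ) hΔ
      · -- φ = m branch
        have hd : fderiv ℝ φ x = fderiv ℝ m x := f2 hc
        rcases le_total (η x) (g x) with hc2 | hc2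
        · -- m = g branch
          have hd2 : fderiv ℝ m x = fderiv ℝ g x := f3 hc2
          rcases le_total (f x) (1/4) with hc3 | hc3
          · exact hzero (by rw [hd, hd2, f5 hc3])
          rcases le_total (3/4) (f x) with hc4 | hc4
          · exact hzero (by rw [hd, hd2, f6 hc4])
          -- middle
          have hd3 : fderiv ℝ g x = (2:ℝ) • fderiv ℝ f x := by
            rw [f7 ⟨hc3, hc4⟩, f8]
          have hnorm : ‖fderiv ℝ φ x‖ = 2 * ‖fderiv ℝ f x‖ := by
            rw [hd, hd2, hd3, norm_smul]
            simp
          rw [hnorm]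
          have : 2 * ‖fderiv ℝ f x‖ * w x = 2 * (‖fderiv ℝ f x‖ * w x) := by ring
          rw [this]
          linarith
        · -- m = η branch
          have hd2 : fderiv ℝ m x = fderiv ℝ η x := f4 hc2
          by_cases h1 : η x = 1
          · exact hzero (by rw [hd, hd2, f11 h1])
          by_cases h0 : η x = 0
          · exact hzero (by rw [hd, hd2, f12 h0])
          have hηpos : 0 < η x := lt_of_le_of_ne (hη01 x).1 (Ne.symm h0)
          have hηlt : η x < 1 := lt_of_le_of_ne (hη01 x).2 h1
          have hxV : x ∈ V := hηsupp (subset_closure (Function.mem_support.2 h0))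
          have hχ1 : χ x = 1 := by
            rw [hχ_def]
            exact Set.indicator_of_mem hxV _
          have hf34 : f x < 3/4 := by
            by_contra hcon
            push_neg at hcon
            have := hg1v x hcon
            rw [this] at hc2
            linarith
          have hΔ : 1/4 ≤ |f x - χ x| := by
            rw [hχ1, abs_sub_comm]
            exact le_trans (by linarith) (le_abs_self _)
          exact hbad (L₁:ℝ) (le_max_left _ _) (by rw [hd, hd2]; exact hnη) hΔ
    -- integrate the master bound
    have hwmeas : AEMeasurable w (volume : Measure (Eu n)) :=
      hadm.1.1.aestronglyMeasurable.aemeasurable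
    have hmeas1 : AEMeasurable (fun x => 2 * ENNReal.ofReal (‖fderiv ℝ f x‖ * w x))
        (volume : Measure (Eu n)) :=
      (ENNReal.measurable_ofReal.comp_aemeasurable
        (((measurable_fderiv ℝ f).norm.aemeasurable).mul hwmeas)).const_mul 2
    have step1 : gradInt w φ ≤
        ∫⁻ x, (2 * ENNReal.ofReal (‖fderiv ℝ f x‖ * w x) +
          ENNReal.ofReal C * ENNReal.ofReal (|f x - χ x| * w x)) := lintegral_mono_ae master
    rw [lintegral_add_left' hmeas1,
      lintegral_const_mul' 2 _ (by norm_num),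
      lintegral_const_mul' (ENNReal.ofReal C) _ ENNReal.ofReal_ne_top] at step1
    have hgradf : (∫⁻ x, ENNReal.ofReal (‖fderiv ℝ f x‖ * w x)) = gradInt w f := rfl
    rw [hgradf] at step1
    refine ⟨φ, ⟨⟨_, hφlip⟩, hφcompact⟩, htsuppU, hφ1, ?_⟩
    calc gradInt w φ ≤ 2 * gradInt w f +
          ENNReal.ofReal C * ∫⁻ x, ENNReal.ofReal (|f x - χ x| * w x) := step1
      _ ≤ 2 * (perim w V + ENNReal.ofReal (ε/4)) +
          ENNReal.ofReal C * ENNReal.ofReal (ε/(2*C)) := by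
          exact add_le_add (mul_le_mul_right hk1.le 2) (mul_le_mul_right hk2.le _)
      _ = ENNReal.ofReal ε + 2 * perim w V := by
          have hCne : C ≠ 0 := hC.ne'
          have e1 : (2:ℝ≥0∞) * ENNReal.ofReal (ε/4) = ENNReal.ofReal (ε/2) := by
            rw [show (2:ℝ≥0∞) = ENNReal.ofReal 2 by simp,
              ← ENNReal.ofReal_mul (by norm_num : (0:ℝ) ≤ 2)]
            congr 1
            ring
          have e2 : ENNReal.ofReal C * ENNReal.ofReal (ε/(2*C)) = ENNReal.ofReal (ε/2) := by
            rw [← ENNReal.ofReal_mul hC.le]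
            congr 1
            field_simp
          have e3 : ENNReal.ofReal (ε/2) + ENNReal.ofReal (ε/2) = ENNReal.ofReal ε := by
            rw [← ENNReal.ofReal_add (by positivity) (by positivity)]
            congr 1
            ring
          rw [mul_add, e1, e2, add_assoc, e3, add_comm]

end
end

section
/- Let w be a weight and S ⊆ ℝⁿ compact. Suppose for every ε > 0 there exist a neighborhood U of S with ∫_U w ≤ ε and a compactly supported Lipschitz function χ with supp χ ⊆ U, 0 ≤ χ ≤ 1 on U, χ = 1 in a neighborhood of S, and ∫|∇χ| w ≤ ε. Then S is L^∞_{1/w}-removable for the equation div v = 0. -/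
open MeasureTheory Metric Filter Set ENNReal

noncomputable section

variable {n : ℕ}

/-- Auxiliary: the product of two bounded Lipschitz functions is Lipschitz. -/
lemma isLip_mul {n : ℕ} {φ χ : Eu n → ℝ} {A B : ℝ} (hφ : IsLip φ) (hχ : IsLip χ)
    (hφb : ∀ x, |φ x| ≤ A) (hχb : ∀ x, |χ x| ≤ B) :
    IsLip (fun x => φ x * χ x) := by
  obtain ⟨Kφ, hKφ⟩ := hφ
  obtain ⟨Kχ, hKχ⟩ := hχ
  have hA : 0 ≤ A := le_trans (abs_nonneg _) (hφb 0)
  have hB : 0 ≤ B := le_trans (abs_nonneg _) (hχb 0)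
  refine ⟨A.toNNReal * Kχ + B.toNNReal * Kφ, LipschitzWith.of_dist_le_mul fun x y => ?_⟩
  have h1 := hKφ.dist_le_mul x y
  have h2 := hKχ.dist_le_mul x y
  rw [Real.dist_eq] at h1 h2 ⊢
  have key : |φ x * χ x - φ y * χ y| ≤ |φ x| * |χ x - χ y| + |χ y| * |φ x - φ y| := by
    have e : φ x * χ x - φ y * χ y = φ x * (χ x - χ y) + χ y * (φ x - φ y) := by ring
    rw [e]
    exact (abs_add_le _ _).trans (by rw [abs_mul, abs_mul])
  have e1 : |φ x| * |χ x - χ y| ≤ A * ((Kχ : ℝ) * dist x y) :=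
    mul_le_mul (hφb x) h2 (abs_nonneg _) hA
  have e2 : |χ y| * |φ x - φ y| ≤ B * ((Kφ : ℝ) * dist x y) :=
    mul_le_mul (hχb y) h1 (abs_nonneg _) hB
  have hcoe : ((A.toNNReal * Kχ + B.toNNReal * Kφ : NNReal) : ℝ)
      = A * (Kχ : ℝ) + B * (Kφ : ℝ) := by
    push_cast
    rw [Real.coe_toNNReal _ hA, Real.coe_toNNReal _ hB]
  rw [hcoe]
  calc |φ x * χ x - φ y * χ y| ≤ _ := key
  _ ≤ A * ((Kχ:ℝ) * dist x y) + B * ((Kφ:ℝ) * dist x y) := add_le_add e1 e2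
  _ = (A * (Kχ:ℝ) + B * (Kφ:ℝ)) * dist x y := by ring

/-- Auxiliary: integrability of `x ↦ (∇φ x)(v x)` for compactly supported Lipschitz `φ`
and `v` dominated by `M w`. -/
lemma integrable_pairing {n : ℕ} {w : Eu n → ℝ} (hw : IsWeight w) {v : Eu n → Eu n}
    (hvm : AEStronglyMeasurable v volume) {M : ℝ}
    (hvM : ∀ᵐ x ∂(volume : Measure (Eu n)), ‖v x‖ ≤ M * w x)
    {φ : Eu n → ℝ} {K : NNReal} (hK : LipschitzWith K φ) (hc : HasCompactSupport φ) :
    Integrable (fun x => fderiv ℝ φ x (v x)) := by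
  have hmeas : AEStronglyMeasurable (fun x => fderiv ℝ φ x (v x)) volume :=
    (ContinuousLinearMap.apply ℝ ℝ).aestronglyMeasurable_comp₂ hvm
      (measurable_fderiv ℝ φ).aestronglyMeasurable
  have hwint : IntegrableOn w (tsupport φ) volume := hw.1.integrableOn_isCompact hc
  have hg : Integrable ((tsupport φ).indicator (fun x => (K : ℝ) * M * w x)) volume :=
    IntegrableOn.integrable_indicator (hwint.const_mul ((K : ℝ) * M))
      (isClosed_tsupport φ).measurableSet
  refine hg.mono' hmeas ?_
  filter_upwards [hvM] with x hx
  by_cases hxs : x ∈ tsupport φ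
  · rw [Set.indicator_of_mem hxs]
    calc ‖fderiv ℝ φ x (v x)‖ ≤ ‖fderiv ℝ φ x‖ * ‖v x‖ :=
          (fderiv ℝ φ x).le_opNorm (v x)
    _ ≤ (K : ℝ) * (M * w x) :=
          mul_le_mul (norm_fderiv_le_of_lipschitz ℝ hK) hx (norm_nonneg _) K.2
    _ = (K : ℝ) * M * w x := by ring
  · have hz : fderiv ℝ φ x = 0 := by
      by_contra h
      exact hxs (support_fderiv_subset ℝ (Function.mem_support.mpr h))
    rw [Set.indicator_of_notMem hxs, hz]
    simp

set_option maxHeartbeats 1600000 in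
/-- **A sufficient removability criterion.** Let `w` be a weight and `S` compact. If for
every `ε > 0` there are a neighborhood `U` of `S` with `∫_U w ≤ ε` and a compactly
supported Lipschitz `χ` with `supp χ ⊆ U`, `0 ≤ χ ≤ 1` on `U`, `χ = 1` near `S` and
`∫|∇χ| w ≤ ε`, then `S` is `L^∞_{1/w}`-removable for `div v = 0`. -/
theorem removable_of_good_cutoffs {n : ℕ} (w : Eu n → ℝ) (hw : IsWeight w)
    (S : Set (Eu n)) (hS : IsCompact S)
    (hyp : ∀ ε > (0:ℝ), ∃ U : Set (Eu n), IsOpen U ∧ S ⊆ U ∧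
      wInt w U ≤ ENNReal.ofReal ε ∧
      ∃ χ : Eu n → ℝ, LipTest χ ∧ tsupport χ ⊆ U ∧
        (∀ x ∈ U, 0 ≤ χ x ∧ χ x ≤ 1) ∧
        (∃ V : Set (Eu n), IsOpen V ∧ S ⊆ V ∧ ∀ x ∈ V, χ x = 1) ∧
        gradInt w χ ≤ ENNReal.ofReal ε) :
    RemovableLinf w S := by
  intro v hv hdiv φ hφ
  obtain ⟨hvm, M0, hM0⟩ := hv
  set M : ℝ := |M0| with hMdef
  have hM : 0 ≤ M := abs_nonneg _
  have hvM : ∀ᵐ x ∂(volume : Measure (Eu n)), ‖v x‖ ≤ M * w x := by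
    filter_upwards [hM0, hw.2] with x h1 h2
    exact h1.trans (mul_le_mul_of_nonneg_right (le_abs_self _) h2.le)
  obtain ⟨⟨Kφ, hKφ⟩, hφc⟩ := hφ
  obtain ⟨A, hA⟩ := hφc.exists_bound_of_continuous hKφ.continuous
  have hA0 : 0 ≤ A := le_trans (norm_nonneg _) (hA 0)
  set C : ℝ := M * A + M * Kφ with hCdef
  have hC0 : 0 ≤ C := by positivity
  have key : ∀ ε > (0:ℝ), |divPairing v φ| ≤ C * ε := by
    intro ε hε
    obtain ⟨U, hUo, hSU, hUw, χ, ⟨⟨Kχ, hKχ⟩, hχc⟩, hχU, hχ01, ⟨V, hVo, hSV, hχV⟩, hχg⟩ :=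
      hyp ε hε
    have hχb : ∀ x, |χ x| ≤ 1 := by
      intro x
      by_cases hx : x ∈ U
      · rcases hχ01 x hx with ⟨h1, h2⟩
        rw [abs_le]; exact ⟨by linarith, h2⟩
      · have hz : χ x = 0 := image_eq_zero_of_notMem_tsupport (fun h => hx (hχU h))
        simp [hz]
    set ψ : Eu n → ℝ := fun x => φ x * χ x with hψdef
    have hψlip : IsLip ψ :=
      isLip_mul ⟨Kφ, hKφ⟩ ⟨Kχ, hKχ⟩ (fun x => (Real.norm_eq_abs _) ▸ hA x) hχb
    obtain ⟨Kψ, hKψ⟩ := hψlip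
    have hψc : HasCompactSupport ψ := hφc.mul_right
    have hdlip : LipschitzWith (Kφ + Kψ) (fun x => φ x - ψ x) := hKφ.sub hKψ
    have hdc : HasCompactSupport (fun x => φ x - ψ x) := by
      refine HasCompactSupport.intro (hφc.union hψc) fun x hx => ?_
      have h1 : φ x = 0 := image_eq_zero_of_notMem_tsupport fun h => hx (Set.mem_union_left _ h)
      have h2 : ψ x = 0 := image_eq_zero_of_notMem_tsupport fun h => hx (Set.mem_union_right _ h)
      rw [h1, h2, sub_zero]
    have hvanish : divPairing v (fun x => φ x - ψ x) = 0 := by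
      apply hdiv _ ⟨⟨_, hdlip⟩, hdc⟩
      have hsub : tsupport (fun x => φ x - ψ x) ⊆ Vᶜ := by
        apply closure_minimal _ (isClosed_compl_iff.mpr hVo)
        intro x hx
        simp only [Function.mem_support] at hx
        intro hxV
        exact hx (by simp [hψdef, hχV x hxV])
      exact Set.disjoint_left.mpr fun a ha haS => (hsub ha) (hSV haS)
    have Iψ := integrable_pairing hw hvm hvM hKψ hψc
    have Id := integrable_pairing hw hvm hvM hdlip hdc
    have hae : ∀ᵐ x ∂(volume : Measure (Eu n)),
        fderiv ℝ φ x (v x)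
          = fderiv ℝ (fun y => φ y - ψ y) x (v x) + fderiv ℝ ψ x (v x) := by
      filter_upwards [hKφ.ae_differentiableAt, hKψ.ae_differentiableAt] with x h1 h2
      rw [fderiv_fun_sub h1 h2]
      simp
    have hsplit : divPairing v φ = divPairing v (fun x => φ x - ψ x) + divPairing v ψ := by
      unfold divPairing
      rw [integral_congr_ae hae, integral_add Id Iψ]
      ring
    rw [hsplit, hvanish, zero_add]
    -- now estimate |divPairing v ψ|
    have hmeasψ : AEStronglyMeasurable (fun x => fderiv ℝ ψ x (v x)) volume :=
      (ContinuousLinearMap.apply ℝ ℝ).aestronglyMeasurable_comp₂ hvm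
        (measurable_fderiv ℝ ψ).aestronglyMeasurable
    set f1 : Eu n → ℝ≥0∞ :=
      fun x => ENNReal.ofReal (M * A) * ENNReal.ofReal (‖fderiv ℝ χ x‖ * w x) with hf1def
    set f2 : Eu n → ℝ≥0∞ :=
      fun x => ENNReal.ofReal (M * (Kφ:ℝ)) *
        U.indicator (fun y => ENNReal.ofReal (w y)) x with hf2def
    have hub : ∀ᵐ x ∂(volume : Measure (Eu n)),
        (‖fderiv ℝ ψ x (v x)‖₊ : ℝ≥0∞) ≤ f1 x + f2 x := by
      filter_upwards [hKφ.ae_differentiableAt, hKχ.ae_differentiableAt, hvM, hw.2]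
        with x h1 h2 hx hwx
      have hdψ : fderiv ℝ ψ x = φ x • fderiv ℝ χ x + χ x • fderiv ℝ φ x :=
        fderiv_mul h1 h2
      have t1 : ‖fderiv ℝ ψ x‖ ≤ |φ x| * ‖fderiv ℝ χ x‖ + |χ x| * ‖fderiv ℝ φ x‖ := by
        rw [hdψ]
        refine (norm_add_le _ _).trans ?_
        rw [norm_smul, norm_smul, Real.norm_eq_abs, Real.norm_eq_abs]
      have t2 : ‖fderiv ℝ ψ x (v x)‖ ≤
          (|φ x| * ‖fderiv ℝ χ x‖ + |χ x| * ‖fderiv ℝ φ x‖) * (M * w x) := by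
        refine ((fderiv ℝ ψ x).le_opNorm (v x)).trans ?_
        exact mul_le_mul t1 hx (norm_nonneg _)
          (by positivity)
      by_cases hxU : x ∈ U
      · have hreal : ‖fderiv ℝ ψ x (v x)‖ ≤
            M * A * (‖fderiv ℝ χ x‖ * w x) + M * (Kφ:ℝ) * w x := by
          have b1 : |φ x| ≤ A := (Real.norm_eq_abs _) ▸ hA x
          have b2 : |χ x| ≤ 1 := hχb x
          have b3 : ‖fderiv ℝ φ x‖ ≤ (Kφ:ℝ) := norm_fderiv_le_of_lipschitz ℝ hKφ
          have hw0 : (0:ℝ) ≤ w x := hwx.le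
          have c1 : |φ x| * ‖fderiv ℝ χ x‖ * (M * w x)
              ≤ A * ‖fderiv ℝ χ x‖ * (M * w x) :=
            mul_le_mul_of_nonneg_right
              (mul_le_mul_of_nonneg_right b1 (norm_nonneg _)) (mul_nonneg hM hw0)
          have c2 : |χ x| * ‖fderiv ℝ φ x‖ * (M * w x) ≤ (Kφ:ℝ) * (M * w x) := by
            have h := mul_le_mul_of_nonneg_right
              (mul_le_mul b2 b3 (norm_nonneg _) zero_le_one) (mul_nonneg hM hw0)
            rwa [one_mul] at h
          have e0 : (|φ x| * ‖fderiv ℝ χ x‖ + |χ x| * ‖fderiv ℝ φ x‖) * (M * w x)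
              = |φ x| * ‖fderiv ℝ χ x‖ * (M * w x)
                + |χ x| * ‖fderiv ℝ φ x‖ * (M * w x) := by ring
          have e1 : A * ‖fderiv ℝ χ x‖ * (M * w x)
              = M * A * (‖fderiv ℝ χ x‖ * w x) := by ring
          have e2 : (Kφ:ℝ) * (M * w x) = M * (Kφ:ℝ) * w x := by ring
          refine t2.trans ?_
          rw [e0]
          linarith
        calc (‖fderiv ℝ ψ x (v x)‖₊ : ℝ≥0∞) = ENNReal.ofReal ‖fderiv ℝ ψ x (v x)‖ :=
              by rw [ofReal_norm, enorm_eq_nnnorm]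
        _ ≤ ENNReal.ofReal (M * A * (‖fderiv ℝ χ x‖ * w x) + M * (Kφ:ℝ) * w x) :=
              ENNReal.ofReal_le_ofReal hreal
        _ ≤ f1 x + f2 x := by
              rw [hf1def, hf2def]
              simp only [Set.indicator_of_mem hxU]
              rw [← ENNReal.ofReal_mul (by positivity : (0:ℝ) ≤ M * A),
                ← ENNReal.ofReal_mul (by positivity : (0:ℝ) ≤ M * (Kφ:ℝ))]
              exact ENNReal.ofReal_add_le
      · have hz : χ x = 0 := image_eq_zero_of_notMem_tsupport (fun h => hxU (hχU h))
        have hzd : fderiv ℝ χ x = 0 := by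
          by_contra h
          exact hxU (hχU (support_fderiv_subset ℝ (Function.mem_support.mpr h)))
        have hreal : ‖fderiv ℝ ψ x (v x)‖ = 0 := by
          have : fderiv ℝ ψ x = 0 := by
            rw [hdψ, hz, hzd]; simp
          rw [this]; simp
        have hzz : (‖fderiv ℝ ψ x (v x)‖₊ : ℝ≥0∞) = 0 := by
          rw [← enorm_eq_nnnorm, ← ofReal_norm, hreal]
          simp
        rw [hzz]
        exact bot_le
    have hf1m : AEMeasurable f1 volume := by
      refine AEMeasurable.const_mul ?_ _
      exact (((measurable_fderiv ℝ χ).norm.aemeasurable.mul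
        hw.1.aestronglyMeasurable.aemeasurable)).ennreal_ofReal
    have hlint : ∫⁻ x, (‖fderiv ℝ ψ x (v x)‖₊ : ℝ≥0∞) ≤ ENNReal.ofReal (C * ε) := by
      calc ∫⁻ x, (‖fderiv ℝ ψ x (v x)‖₊ : ℝ≥0∞) ≤ ∫⁻ x, (f1 x + f2 x) :=
            lintegral_mono_ae hub
      _ = (∫⁻ x, f1 x) + ∫⁻ x, f2 x := lintegral_add_left' hf1m _
      _ = ENNReal.ofReal (M * A) * gradInt w χ
            + ENNReal.ofReal (M * (Kφ:ℝ)) * wInt w U := by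
            rw [hf1def, hf2def]
            rw [lintegral_const_mul' _ _ ENNReal.ofReal_ne_top,
              lintegral_const_mul' _ _ ENNReal.ofReal_ne_top,
              lintegral_indicator hUo.measurableSet]
            rfl
      _ ≤ ENNReal.ofReal (M * A) * ENNReal.ofReal ε
            + ENNReal.ofReal (M * (Kφ:ℝ)) * ENNReal.ofReal ε := by
            gcongr
      _ = ENNReal.ofReal (C * ε) := by
            rw [← ENNReal.ofReal_mul (by positivity), ← ENNReal.ofReal_mul (by positivity),
              ← ENNReal.ofReal_add (by positivity) (by positivity), hCdef]
            ring_nf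
    have habs : |divPairing v ψ| ≤ C * ε := by
      have h1 : |divPairing v ψ| ≤ ∫ x, ‖fderiv ℝ ψ x (v x)‖ := by
        unfold divPairing
        rw [abs_neg, ← Real.norm_eq_abs]
        exact norm_integral_le_integral_norm _
      have h2 : ∫ x, ‖fderiv ℝ ψ x (v x)‖ =
          (∫⁻ x, (‖fderiv ℝ ψ x (v x)‖₊ : ℝ≥0∞)).toReal :=
        integral_norm_eq_lintegral_enorm hmeasψ
      have h3 : (∫⁻ x, (‖fderiv ℝ ψ x (v x)‖₊ : ℝ≥0∞)).toReal ≤ C * ε := by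
        refine le_trans (ENNReal.toReal_mono ENNReal.ofReal_ne_top hlint) ?_
        rw [ENNReal.toReal_ofReal (by positivity)]
      linarith [h1, h2 ▸ h1, h3]
    exact habs
  have hle : |divPairing v φ| ≤ 0 := by
    refine le_of_forall_pos_le_add fun ε hε => ?_
    have h := key (ε / (C + 1)) (by positivity)
    have h2 : C * (ε / (C + 1)) ≤ ε := by
      have hd : C / (C + 1) ≤ 1 := div_le_one_of_le₀ (by linarith) (by positivity)
      calc C * (ε / (C + 1)) = ε * (C / (C + 1)) := by ring
      _ ≤ ε * 1 := mul_le_mul_of_nonneg_left hd hε.le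
      _ = ε := mul_one ε
    linarith
  exact abs_eq_zero.mp (le_antisymm hle (abs_nonneg _))


end
end
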